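/- arXiv:1801.07242 — 10 statements merged into one kernel-verified Lean document; each statement's English description precedes it below -/
import Mathlib

section
/- Fix an integer n ≥ 1. Then 𝔏₁Φ₀ = 0, and the power series Φ₁ := ((n−1)/(24n))·(n + (n+1)·L⁻¹ − (2n+1)·L^{−(n+1)})·Φ₀ has zero constant term and satisfies 𝔏₁Φ₁ + L⁻¹·𝔏₂Φ₀ = 0. -/
/-- The operator `D = q·d/dq` on `ℚ[[q]]`. -/
noncomputable def Dq (f : PowerSeries ℚ) : PowerSeries ℚ :=
  PowerSeries.mk fun d => (d : ℚ) * PowerSeries.coeff d f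

/-- `𝔏₁ = n·Lⁿ·D + ((n−1)/2)·(Lⁿ−1)` acting on `ℚ[[q]]`. -/
noncomputable def opL1 (n : ℕ) (L f : PowerSeries ℚ) : PowerSeries ℚ :=
  PowerSeries.C (n : ℚ) * L ^ n * Dq f +
    PowerSeries.C (((n : ℚ) - 1) / 2) * (L ^ n - 1) * f

/-- `𝔏₂ = C(n,2)·Lⁿ·D² + C(n−1,2)·(Lⁿ−1)·D
      + ((n−1)(n−2)/(24n))·L^{−n}·((3n−5)·Lⁿ + n + 5)·(Lⁿ−1)` acting on `ℚ[[q]]`. -/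
noncomputable def opL2 (n : ℕ) (L f : PowerSeries ℚ) : PowerSeries ℚ :=
  PowerSeries.C (n.choose 2 : ℚ) * L ^ n * Dq (Dq f) +
    PowerSeries.C ((n - 1).choose 2 : ℚ) * (L ^ n - 1) * Dq f +
    PowerSeries.C (((n : ℚ) - 1) * ((n : ℚ) - 2) / (24 * (n : ℚ))) * (L ^ n)⁻¹ *
      (PowerSeries.C (3 * (n : ℚ) - 5) * L ^ n + PowerSeries.C ((n : ℚ) + 5)) *
      (L ^ n - 1) * f

/-!
Differentiating `Lⁿ = 1 + q` and `Φ₀² Lⁿ = L` gives `n (1 + q) D L = q L` and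
`2n (1 + q) D Φ₀ = -(n - 1) q Φ₀`; differentiating the latter once more determines `D² Φ₀`.
In the fraction field of `ℚ⟦q⟧` these express every derivative occurring in the claims as a
rational function of `L` and `Φ₀`, and after substituting `q = Lⁿ - 1` the claims become
identities between rational functions, linear in `Φ₀`.
-/

open PowerSeries

noncomputable def eulerDerivation : Derivation ℚ ℚ⟦X⟧ ℚ⟦X⟧ := (X : ℚ⟦X⟧) • d⁄dX ℚ

local notation "𝒟" => eulerDerivation

theorem Dq_eq_eulerDerivation (f : ℚ⟦X⟧) : Dq f = 𝒟 f := by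
  ext (_ | d)
  · simp [Dq, eulerDerivation]
  · simp [Dq, eulerDerivation, coeff_derivative]
    ring

@[simp]
theorem eulerDerivation_X : 𝒟 X = X := by
  simp [eulerDerivation]

@[simp]
theorem eulerDerivation_C (r : ℚ) : 𝒟 (C r) = 0 := by
  simp [eulerDerivation]

@[simp]
theorem eulerDerivation_ofNat (k : ℕ) [k.AtLeastTwo] :
    𝒟 (no_index (OfNat.ofNat k : ℚ⟦X⟧)) = 0 := by
  rw [← Nat.cast_ofNat (R := ℚ⟦X⟧)]
  exact Derivation.map_natCast 𝒟 _

theorem eulerDerivation_inv {f : ℚ⟦X⟧} (hf : constantCoeff f ≠ 0) : 𝒟 f⁻¹ = -f⁻¹ ^ 2 * 𝒟 f :=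
  Derivation.leibniz_of_mul_eq_one 𝒟 (PowerSeries.inv_mul_cancel f hf)

theorem PowerSeries.map_C_eq_ratCast {K : Type*} [DivisionRing K] (φ : ℚ⟦X⟧ →+* K) (r : ℚ) :
    φ (C r) = r :=
  eq_ratCast (φ.comp C) r

theorem PowerSeries.map_inv_of_constantCoeff_ne_zero {k K : Type*} [Field k] [DivisionRing K]
    (φ : k⟦X⟧ →+* K) {f : k⟦X⟧} (hf : constantCoeff f ≠ 0) : φ f⁻¹ = (φ f)⁻¹ :=
  eq_inv_of_mul_eq_one_left (by rw [← map_mul, PowerSeries.inv_mul_cancel _ hf, map_one])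

noncomputable def phi1 (n : ℕ) (L Φ₀ : ℚ⟦X⟧) : ℚ⟦X⟧ :=
  C (((n : ℚ) - 1) / (24 * (n : ℚ))) *
    (C (n : ℚ) + C ((n : ℚ) + 1) * L⁻¹ - C (2 * (n : ℚ) + 1) * (L ^ (n + 1))⁻¹) * Φ₀

theorem constantCoeff_phi1 {n : ℕ} {L : ℚ⟦X⟧} (hL0 : constantCoeff L = 1) (Φ₀ : ℚ⟦X⟧) :
    constantCoeff (phi1 n L Φ₀) = 0 := by
  simp only [phi1, map_mul, map_add, map_sub, constantCoeff_C, constantCoeff_inv, map_pow, hL0,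
    one_pow, inv_one]
  ring

section

-- `n = m + 1`, so that `Φ₀² Lⁿ⁻¹ = 1` reads `Φ ^ 2 * L ^ m = 1` without truncated subtraction.
variable {m : ℕ} {L Φ : ℚ⟦X⟧}

theorem succ_mul_one_add_X_mul_eulerDerivation (hLn : L ^ (m + 1) = 1 + X) :
    (m + 1 : ℚ⟦X⟧) * (1 + X) * 𝒟 L = X * L := by
  have h := congrArg 𝒟 hLn
  simp only [Derivation.leibniz_pow, map_add, Derivation.map_one_eq_zero, eulerDerivation_X,
    zero_add, nsmul_eq_mul, smul_eq_mul, Nat.add_sub_cancel] at h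
  push_cast at h
  linear_combination L * h - (m + 1 : ℚ⟦X⟧) * 𝒟 L * hLn

theorem two_mul_succ_mul_one_add_X_mul_eulerDerivation (hLn : L ^ (m + 1) = 1 + X)
    (hΦ : Φ ^ 2 * L ^ m = 1) :
    2 * (m + 1 : ℚ⟦X⟧) * (1 + X) * 𝒟 Φ = -((m : ℚ⟦X⟧) * X * Φ) := by
  have hΦL : Φ ^ 2 * (1 + X) = L := by linear_combination L * hΦ - Φ ^ 2 * hLn
  have h := congrArg 𝒟 hΦL
  simp only [Derivation.leibniz, Derivation.leibniz_pow, map_add, Derivation.map_one_eq_zero,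
    eulerDerivation_X, zero_add, nsmul_eq_mul, smul_eq_mul] at h
  have hΦ0 : Φ ≠ 0 := by rintro rfl; simp at hΦ
  have hX : (1 + X : ℚ⟦X⟧) ≠ 0 := fun h ↦ by simpa using congrArg constantCoeff h
  refine mul_left_cancel₀ (mul_ne_zero hΦ0 hX) ?_
  linear_combination (m + 1 : ℚ⟦X⟧) * (1 + X) * h + succ_mul_one_add_X_mul_eulerDerivation hLn -
    (X : ℚ⟦X⟧) * hΦL

theorem two_mul_succ_mul_eulerDerivation_eulerDerivation (hLn : L ^ (m + 1) = 1 + X)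
    (hΦ : Φ ^ 2 * L ^ m = 1) :
    2 * (m + 1 : ℚ⟦X⟧) * (X * 𝒟 Φ + (1 + X) * 𝒟 (𝒟 Φ)) =
      -((m : ℚ⟦X⟧) * (X * Φ + X * 𝒟 Φ)) := by
  have h := congrArg 𝒟 (two_mul_succ_mul_one_add_X_mul_eulerDerivation hLn hΦ)
  simp only [Derivation.leibniz, map_add, map_neg, Derivation.map_natCast,
    Derivation.map_one_eq_zero, eulerDerivation_X, eulerDerivation_ofNat, smul_eq_mul] at h
  linear_combination h

local notation "𝕂" => FractionRing ℚ⟦X⟧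
local notation "ι" => algebraMap ℚ⟦X⟧ 𝕂

instance : CharZero 𝕂 := charZero_of_injective_algebraMap (algebraMap ℚ 𝕂).injective

theorem one_add_algebraMap_X_ne_zero : 1 + ι X ≠ 0 := by
  rw [← map_one ι, ← map_add, map_ne_zero_iff _ (IsFractionRing.injective ℚ⟦X⟧ 𝕂)]
  exact fun h ↦ by simpa using congrArg constantCoeff h

theorem algebraMap_eulerDerivation_of_pow_eq (hLn : L ^ (m + 1) = 1 + X) :
    ι (𝒟 L) = ι X * ι L / ((m + 1) * (1 + ι X)) := by
  have h := congrArg ι (succ_mul_one_add_X_mul_eulerDerivation hLn)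
  simp only [map_mul, map_add, map_one, map_natCast] at h
  have := one_add_algebraMap_X_ne_zero
  field_simp
  linear_combination h

theorem algebraMap_eulerDerivation_of_sq_mul_pow_eq_one (hLn : L ^ (m + 1) = 1 + X)
    (hΦ : Φ ^ 2 * L ^ m = 1) :
    ι (𝒟 Φ) = -(m * ι X * ι Φ) / (2 * (m + 1) * (1 + ι X)) := by
  have h := congrArg ι (two_mul_succ_mul_one_add_X_mul_eulerDerivation hLn hΦ)
  simp only [map_mul, map_add, map_one, map_neg, map_natCast, map_ofNat] at h
  have := one_add_algebraMap_X_ne_zero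
  field_simp
  linear_combination h

theorem algebraMap_eulerDerivation_eulerDerivation_of_sq_mul_pow_eq_one
    (hLn : L ^ (m + 1) = 1 + X) (hΦ : Φ ^ 2 * L ^ m = 1) :
    ι (𝒟 (𝒟 Φ)) =
      m * ι X * ι Φ * (m * ι X - 2 * (m + 1)) / (4 * (m + 1) ^ 2 * (1 + ι X) ^ 2) := by
  have h := congrArg ι (two_mul_succ_mul_eulerDerivation_eulerDerivation hLn hΦ)
  simp only [map_mul, map_add, map_one, map_neg, map_natCast, map_ofNat,
    algebraMap_eulerDerivation_of_sq_mul_pow_eq_one hLn hΦ] at h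
  have := one_add_algebraMap_X_ne_zero
  field_simp at h ⊢
  linear_combination h

theorem opL1_eq_zero (hLn : L ^ (m + 1) = 1 + X) (hΦ : Φ ^ 2 * L ^ m = 1) :
    opL1 (m + 1) L Φ = 0 := by
  apply IsFractionRing.injective ℚ⟦X⟧ 𝕂
  simp only [opL1, Dq_eq_eulerDerivation, hLn, map_add, map_mul, map_sub, map_one, map_zero,
    map_C_eq_ratCast, algebraMap_eulerDerivation_of_sq_mul_pow_eq_one hLn hΦ]
  have := one_add_algebraMap_X_ne_zero
  push_cast
  field_simp
  ring

theorem opL1_phi1_add_inv_mul_opL2 (hL0 : constantCoeff L = 1) (hLn : L ^ (m + 1) = 1 + X)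
    (hΦ : Φ ^ 2 * L ^ m = 1) :
    opL1 (m + 1) L (phi1 (m + 1) L Φ) + L⁻¹ * opL2 (m + 1) L Φ = 0 := by
  have hx : ι X = ι L ^ (m + 1) - 1 := by rw [← map_pow, hLn]; simp
  have hℓ : ι L ≠ 0 := by
    rw [map_ne_zero_iff _ (IsFractionRing.injective ℚ⟦X⟧ 𝕂)]
    rintro rfl
    simp at hL0
  apply IsFractionRing.injective ℚ⟦X⟧ 𝕂
  simp only [opL1, opL2, phi1, Dq_eq_eulerDerivation, Derivation.leibniz, Derivation.leibniz_pow,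
    eulerDerivation_inv, hL0, one_pow, map_add, map_sub, map_mul, map_neg, map_pow, map_zero,
    map_one, map_natCast, map_C_eq_ratCast, map_inv_of_constantCoeff_ne_zero, eulerDerivation_C,
    Derivation.map_natCast, Derivation.map_one_eq_zero, smul_eq_mul, nsmul_eq_mul, ne_eq,
    one_ne_zero, not_false_eq_true, algebraMap_eulerDerivation_of_pow_eq hLn,
    algebraMap_eulerDerivation_of_sq_mul_pow_eq_one hLn hΦ,
    algebraMap_eulerDerivation_eulerDerivation_of_sq_mul_pow_eq_one hLn hΦ,
    Nat.cast_choose_two, Nat.add_sub_cancel]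
  rw [hx]
  have := pow_ne_zero (m + 1) hℓ
  push_cast
  field_simp
  ring

end

theorem stmt_1_general (n : ℕ) (hn : 1 ≤ n) (L Φ₀ : PowerSeries ℚ)
    (hL0 : PowerSeries.constantCoeff L = 1) (hLn : L ^ n = 1 + PowerSeries.X)
    (hΦ₀ : Φ₀ ^ 2 * L ^ (n - 1) = 1) :
    opL1 n L Φ₀ = 0 ∧
    PowerSeries.constantCoeff
        (PowerSeries.C (((n : ℚ) - 1) / (24 * (n : ℚ))) *
          (PowerSeries.C (n : ℚ) + PowerSeries.C ((n : ℚ) + 1) * L⁻¹ -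
            PowerSeries.C (2 * (n : ℚ) + 1) * (L ^ (n + 1))⁻¹) * Φ₀) = 0 ∧
    opL1 n L
        (PowerSeries.C (((n : ℚ) - 1) / (24 * (n : ℚ))) *
          (PowerSeries.C (n : ℚ) + PowerSeries.C ((n : ℚ) + 1) * L⁻¹ -
            PowerSeries.C (2 * (n : ℚ) + 1) * (L ^ (n + 1))⁻¹) * Φ₀) +
      L⁻¹ * opL2 n L Φ₀ = 0 := by
  obtain ⟨m, rfl⟩ : ∃ m, n = m + 1 := ⟨n - 1, by omega⟩
  rw [Nat.add_sub_cancel] at hΦ₀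
  exact ⟨opL1_eq_zero hLn hΦ₀, constantCoeff_phi1 hL0 Φ₀, opL1_phi1_add_inv_mul_opL2 hL0 hLn hΦ₀⟩

/-- `𝔏₁Φ₀ = 0`, and `Φ₁ = ((n−1)/(24n))·(n + (n+1)·L⁻¹ − (2n+1)·L^{−(n+1)})·Φ₀`
has zero constant term and satisfies `𝔏₁Φ₁ + L⁻¹·𝔏₂Φ₀ = 0`.
Here `L` is the unique power series with constant term `1` and `Lⁿ = 1+q`, and
`Φ₀` is the unique power series with constant term `1` and `Φ₀²·L^{n−1} = 1`. -/
theorem stmt_1 (n : ℕ) (hn : 1 ≤ n) (L Φ₀ : PowerSeries ℚ)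
    (hL0 : PowerSeries.constantCoeff L = 1) (hLn : L ^ n = 1 + PowerSeries.X)
    (hΦ₀0 : PowerSeries.constantCoeff Φ₀ = 1) (hΦ₀ : Φ₀ ^ 2 * L ^ (n - 1) = 1) :
    opL1 n L Φ₀ = 0 ∧
    PowerSeries.constantCoeff
        (PowerSeries.C (((n : ℚ) - 1) / (24 * (n : ℚ))) *
          (PowerSeries.C (n : ℚ) + PowerSeries.C ((n : ℚ) + 1) * L⁻¹ -
            PowerSeries.C (2 * (n : ℚ) + 1) * (L ^ (n + 1))⁻¹) * Φ₀) = 0 ∧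
    opL1 n L
        (PowerSeries.C (((n : ℚ) - 1) / (24 * (n : ℚ))) *
          (PowerSeries.C (n : ℚ) + PowerSeries.C ((n : ℚ) + 1) * L⁻¹ -
            PowerSeries.C (2 * (n : ℚ) + 1) * (L ^ (n + 1))⁻¹) * Φ₀) +
      L⁻¹ * opL2 n L Φ₀ = 0 :=
  stmt_1_general n hn L Φ₀ hL0 hLn hΦ₀
end

section
/- Fix an integer n ≥ 1. For every p ≥ 0 one has Φ_{p;0} = L^p·Φ₀ and Φ_{p;1} = L^p·Φ₁ − ((n−p)·p/(2n))·L^{p−1}·(1 − L^{−n})·Φ₀ in ℚ[[q]]. -/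
open PowerSeries

theorem Dq_eq_X_mul_derivative (f : ℚ⟦X⟧) : Dq f = X * d⁄dX ℚ f := by
  ext (_ | d)
  · simp [Dq]
  · rw [coeff_succ_X_mul, coeff_derivative, Dq, coeff_mk]
    push_cast
    ring

theorem Dq_mul (f g : ℚ⟦X⟧) : Dq (f * g) = Dq f * g + f * Dq g := by
  simp only [Dq_eq_X_mul_derivative, Derivation.leibniz, smul_eq_mul]
  ring

theorem Dq_one_add_X : Dq (1 + X) = X := by
  simp [Dq_eq_X_mul_derivative]

theorem mul_Dq_pow (f : ℚ⟦X⟧) (p : ℕ) : f * Dq (f ^ p) = C (p : ℚ) * f ^ p * Dq f := by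
  induction p with
  | zero => simp [Dq_eq_X_mul_derivative]
  | succ p ih =>
    rw [pow_succ, Dq_mul]
    simp only [Nat.cast_succ, map_add, map_one]
    linear_combination f * ih

section

variable {n : ℕ} {L : ℚ⟦X⟧}

theorem exponent_ne_zero_of_pow_eq_one_add_X (hLn : L ^ n = 1 + X) : n ≠ 0 := by
  rintro rfl
  simp at hLn

theorem pow_ne_zero_of_pow_eq_one_add_X (hLn : L ^ n = 1 + X) : L ^ n ≠ 0 := by
  rw [hLn]
  exact fun h => by simpa using congrArg constantCoeff h

theorem X_eq_pow_mul_one_sub_inv (hLn : L ^ n = 1 + X) : X = L ^ n * (1 - (L ^ n)⁻¹) := by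
  rw [mul_sub, mul_one, PowerSeries.mul_inv_cancel _ (by simp [hLn]), hLn]
  ring

theorem C_mul_Dq_of_pow_eq_one_add_X (hLn : L ^ n = 1 + X) :
    C (n : ℚ) * Dq L = L * (1 - (L ^ n)⁻¹) := by
  have hDLn := mul_Dq_pow L n
  rw [hLn, Dq_one_add_X, ← hLn, X_eq_pow_mul_one_sub_inv hLn] at hDLn
  refine mul_left_cancel₀ (pow_ne_zero_of_pow_eq_one_add_X hLn) ?_
  linear_combination -hDLn

theorem C_mul_Dq_pow (hLn : L ^ n = 1 + X) (p : ℕ) :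
    C (n : ℚ) * Dq (L ^ p) = C (p : ℚ) * L ^ p * (1 - (L ^ n)⁻¹) := by
  have hL : L ≠ 0 :=
    ne_zero_pow (exponent_ne_zero_of_pow_eq_one_add_X hLn) (pow_ne_zero_of_pow_eq_one_add_X hLn)
  refine mul_left_cancel₀ hL ?_
  linear_combination
    C (n : ℚ) * mul_Dq_pow L p + C (p : ℚ) * L ^ p * C_mul_Dq_of_pow_eq_one_add_X hLn

theorem two_mul_C_mul_Dq_of_sq_mul_pow_eq_one {Φ₀ : ℚ⟦X⟧} (hLn : L ^ n = 1 + X)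
    (hΦ₀ : Φ₀ ^ 2 * L ^ (n - 1) = 1) :
    2 * C (n : ℚ) * Dq Φ₀ = (1 - C (n : ℚ)) * (1 - (L ^ n)⁻¹) * Φ₀ := by
  have hΦ₀L : Φ₀ ^ 2 * L ^ n = L := by
    rw [← pow_sub_one_mul (exponent_ne_zero_of_pow_eq_one_add_X hLn), ← mul_assoc, hΦ₀, one_mul]
  have hD := congrArg Dq hΦ₀L
  rw [Dq_mul, pow_two, Dq_mul, hLn, Dq_one_add_X, ← hLn] at hD
  have hΦ₀ne : Φ₀ ≠ 0 := by
    rintro rfl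
    simp at hΦ₀
  refine mul_left_cancel₀ (mul_ne_zero hΦ₀ne (pow_ne_zero_of_pow_eq_one_add_X hLn)) ?_
  linear_combination C (n : ℚ) * hD + C_mul_Dq_of_pow_eq_one_add_X hLn
    - C (n : ℚ) * Φ₀ ^ 2 * X_eq_pow_mul_one_sub_inv hLn - (1 - (L ^ n)⁻¹) * hΦ₀L

theorem Dq_pow_mul_of_sq_mul_pow_eq_one {Φ₀ : ℚ⟦X⟧} (hLn : L ^ n = 1 + X)
    (hΦ₀ : Φ₀ ^ 2 * L ^ (n - 1) = 1) (p : ℕ) :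
    Dq (L ^ p * Φ₀) = C ((2 * p + 1 - n) / (2 * n) : ℚ) * L ^ p * (1 - (L ^ n)⁻¹) * Φ₀ := by
  have hn : (n : ℚ) ≠ 0 := Nat.cast_ne_zero.mpr (exponent_ne_zero_of_pow_eq_one_add_X hLn)
  have hC :
      C (2 * n : ℚ) * C ((2 * p + 1 - n) / (2 * n) : ℚ) = 2 * C (p : ℚ) + 1 - C (n : ℚ) := by
    rw [← map_mul, mul_div_cancel₀ _ (by positivity)]
    simp only [map_sub, map_add, map_mul, map_one, map_ofNat]
  have h2n : C (2 * n : ℚ) ≠ 0 := (map_ne_zero_iff _ C_injective).mpr (by positivity)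
  refine mul_left_cancel₀ h2n ?_
  simp only [map_mul, map_ofNat] at hC ⊢
  linear_combination 2 * C (n : ℚ) * Dq_mul (L ^ p) Φ₀ + 2 * Φ₀ * C_mul_Dq_pow hLn p
    + L ^ p * two_mul_C_mul_Dq_of_sq_mul_pow_eq_one hLn hΦ₀ - L ^ p * (1 - (L ^ n)⁻¹) * Φ₀ * hC

end

theorem stmt_2_general (n : ℕ) (L Φ₀ Φ₁ : PowerSeries ℚ)
    (hLn : L ^ n = 1 + PowerSeries.X)
    (hΦ₀ : Φ₀ ^ 2 * L ^ (n - 1) = 1)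
    (P0 P1 : ℕ → PowerSeries ℚ)
    (hP00 : P0 0 = Φ₀) (hP10 : P1 0 = Φ₁)
    (hP0 : ∀ p : ℕ, P0 (p + 1) = L * P0 p)
    (hP1 : ∀ p : ℕ, P1 (p + 1) = L * P1 p + Dq (P0 p)) :
    ∀ p : ℕ,
      P0 p = L ^ p * Φ₀ ∧
      P1 p = L ^ p * Φ₁ -
        PowerSeries.C (((n : ℚ) - (p : ℚ)) * (p : ℚ) / (2 * (n : ℚ))) *
          L ^ (p - 1) * (1 - (L ^ n)⁻¹) * Φ₀ := by
  have hP0_eq (p : ℕ) : P0 p = L ^ p * Φ₀ := by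
    induction p with
    | zero => rw [hP00, pow_zero, one_mul]
    | succ p ih => rw [hP0, ih, pow_succ', mul_assoc]
  have hn : (n : ℚ) ≠ 0 := Nat.cast_ne_zero.mpr (exponent_ne_zero_of_pow_eq_one_add_X hLn)
  intro p
  refine ⟨hP0_eq p, ?_⟩
  induction p with
  | zero => simp [hP10]
  | succ p ih =>
    have hc : ((n : ℚ) - (p + 1)) * (p + 1) / (2 * n) =
        (n - p) * p / (2 * n) - (2 * p + 1 - n) / (2 * n) := by
      field_simp
      ring
    have hLp : C (((n : ℚ) - p) * p / (2 * n)) * L ^ (p - 1) * L =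
        C (((n : ℚ) - p) * p / (2 * n)) * L ^ p := by
      -- `p - 1` truncates at `p = 0`, where the coefficient vanishes.
      rcases p with _ | p
      · simp
      · rw [Nat.add_sub_cancel, pow_succ, mul_assoc]
    rw [hP1, ih, hP0_eq, Dq_pow_mul_of_sq_mul_pow_eq_one hLn hΦ₀, Nat.add_sub_cancel]
    push_cast
    rw [hc, map_sub]
    linear_combination -(1 - (L ^ n)⁻¹) * Φ₀ * hLp

/-- For every `p ≥ 0`: `Φ_{p;0} = L^p·Φ₀` and
`Φ_{p;1} = L^p·Φ₁ − ((n−p)·p/(2n))·L^{p−1}·(1 − L^{−n})·Φ₀` in `ℚ[[q]]`.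
Here `L` is the unique power series with constant term `1` and `Lⁿ = 1+q`,
`Φ₀` is the unique power series with constant term `1` and `Φ₀²·L^{n−1} = 1`,
`Φ₁ = ((n−1)/(24n))·(n + (n+1)·L⁻¹ − (2n+1)·L^{−(n+1)})·Φ₀`, and
`P0 p = Φ_{p;0}`, `P1 p = Φ_{p;1}` are defined by the recursions
`Φ_{0;0} = Φ₀`, `Φ_{0;1} = Φ₁`, `Φ_{p;0} = L·Φ_{p−1;0}`,
`Φ_{p;1} = L·Φ_{p−1;1} + D·Φ_{p−1;0}`. -/
theorem stmt_2 (n : ℕ) (hn : 1 ≤ n) (L Φ₀ Φ₁ : PowerSeries ℚ)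
    (hL0 : PowerSeries.constantCoeff L = 1) (hLn : L ^ n = 1 + PowerSeries.X)
    (hΦ₀0 : PowerSeries.constantCoeff Φ₀ = 1) (hΦ₀ : Φ₀ ^ 2 * L ^ (n - 1) = 1)
    (hΦ₁ : Φ₁ = PowerSeries.C (((n : ℚ) - 1) / (24 * (n : ℚ))) *
      (PowerSeries.C (n : ℚ) + PowerSeries.C ((n : ℚ) + 1) * L⁻¹ -
        PowerSeries.C (2 * (n : ℚ) + 1) * (L ^ (n + 1))⁻¹) * Φ₀)
    (P0 P1 : ℕ → PowerSeries ℚ)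
    (hP00 : P0 0 = Φ₀) (hP10 : P1 0 = Φ₁)
    (hP0 : ∀ p : ℕ, P0 (p + 1) = L * P0 p)
    (hP1 : ∀ p : ℕ, P1 (p + 1) = L * P1 p + Dq (P0 p)) :
    ∀ p : ℕ,
      P0 p = L ^ p * Φ₀ ∧
      P1 p = L ^ p * Φ₁ -
        PowerSeries.C (((n : ℚ) - (p : ℚ)) * (p : ℚ) / (2 * (n : ℚ))) *
          L ^ (p - 1) * (1 - (L ^ n)⁻¹) * Φ₀ :=
  stmt_2_general n L Φ₀ Φ₁ hLn hΦ₀ P0 P1 hP00 hP10 hP0 hP1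
end

section
/- Fix an integer n ≥ 1. Then Σ_{p=0}^{n−1} (Φ_{p;0}/Φ₀)·(Φ_{n−1−p;1}/Φ₀) = n·L^{n−1}·(Φ₁/Φ₀) − ((n²−1)/12)·L^{n−2}·(1 − L^{−n}) in ℚ[[q]] (Φ₀ is invertible since its constant term is 1). -/
namespace Derivation

variable {S A : Type*} [CommSemiring S] [CommRing A] [Algebra S A] (D : Derivation S A A)

def logDeriv (u : Aˣ) : A := D u * ↑u⁻¹

theorem apply_coe_unit (u : Aˣ) : D u = D.logDeriv u * u := by
  simp [logDeriv, mul_assoc]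

theorem logDeriv_mul (u v : Aˣ) : D.logDeriv (u * v) = D.logDeriv u + D.logDeriv v := by
  simp only [logDeriv, Units.val_mul, mul_inv_rev, leibniz, smul_eq_mul]
  linear_combination (D v * ↑v⁻¹) * u.mul_inv + (D u * ↑u⁻¹) * v.mul_inv

theorem logDeriv_pow (u : Aˣ) (k : ℕ) : D.logDeriv (u ^ k) = k • D.logDeriv u := by
  induction k with
  | zero => simp [logDeriv]
  | succ k ih => rw [pow_succ, logDeriv_mul, ih, succ_nsmul]

theorem logDeriv_one : D.logDeriv 1 = 0 := by simp [logDeriv]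

end Derivation

section
variable {R : Type*} [CommRing R] [Algebra ℚ R] (D : Derivation ℚ R R) {k : ℕ} {L Φ₀ : Rˣ}

theorem logDeriv_eq_of_sq_mul_pow_eq_one (h : Φ₀ ^ 2 * L ^ k = 1) :
    D.logDeriv Φ₀ = -((k : ℚ) / 2) • D.logDeriv L := by
  have h' := congrArg D.logDeriv h
  rw [D.logDeriv_mul, D.logDeriv_pow, D.logDeriv_pow, D.logDeriv_one, ← Nat.cast_smul_eq_nsmul ℚ,
    ← Nat.cast_smul_eq_nsmul ℚ] at h'
  linear_combination (norm := module) (1/2 : ℚ) • h'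

theorem eq_pow_mul_of_forall_succ {M : Type*} [Monoid M] {a : ℕ → M} {c : M}
    (h : ∀ p, a (p + 1) = c * a p) (p : ℕ) : a p = c ^ p * a 0 := by
  induction p with
  | zero => simp
  | succ p ih => rw [h, ih, pow_succ', mul_assoc]

theorem sum_range_mul_sub_div_two (n : ℕ) :
    ∑ m ∈ Finset.range n, (m : ℚ) * (m - n) / 2 = -(n * ((n : ℚ) ^ 2 - 1) / 12) := by
  have key (N : ℚ) (n : ℕ) : ∑ m ∈ Finset.range n, (m : ℚ) * (m - N) / 2 =
      n * (n - 1) * (2 * n - 1) / 12 - N * n * (n - 1) / 4 := by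
    induction n with
    | zero => simp
    | succ n ih => rw [Finset.sum_range_succ, ih]; push_cast; ring
  rw [key]
  ring

theorem apply_pow_mul_eq_smul (hΦ : D.logDeriv Φ₀ = -((k : ℚ) / 2) • D.logDeriv L) (p : ℕ) :
    D (↑L ^ p * ↑Φ₀) = ((p : ℚ) - k / 2) • (D.logDeriv L * (↑L ^ p * ↑Φ₀)) := by
  have hcoe : (↑L ^ p * ↑Φ₀ : R) = ↑(L ^ p * Φ₀) := by push_cast; rfl
  rw [hcoe, D.apply_coe_unit, D.logDeriv_mul, D.logDeriv_pow, hΦ, ← Nat.cast_smul_eq_nsmul ℚ,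
    ← add_smul, smul_mul_assoc, sub_eq_add_neg]

theorem eq_pow_mul_add_smul_of_succ (hΦ : D.logDeriv Φ₀ = -((k : ℚ) / 2) • D.logDeriv L)
    (P : ℕ → R) (Φ₁ : R) (h0 : P 0 = Φ₁)
    (hsucc : ∀ m, P (m + 1) = L * P m + D (↑L ^ m * ↑Φ₀)) (m : ℕ) :
    P m = ↑L ^ m * Φ₁ + ((m : ℚ) * (m - (k + 1)) / 2) • (D.logDeriv L * ↑L ^ m * ↑L⁻¹ * ↑Φ₀) := by
  induction m with
  | zero => simp [h0]
  | succ m ih =>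
    have hc : ((m + 1 : ℕ) : ℚ) * ((m + 1 : ℕ) - (k + 1)) / 2 =
        (m : ℚ) * (m - (k + 1)) / 2 + ((m : ℚ) - k / 2) := by push_cast; ring
    rw [hsucc, ih, apply_pow_mul_eq_smul D hΦ, hc, add_smul]
    simp only [Algebra.smul_def]
    linear_combination
      (-(algebraMap ℚ R ((m : ℚ) - k / 2) * D.logDeriv L * ↑L ^ m * ↑Φ₀)) * L.mul_inv

theorem sum_range_mul_inv_mul_mul_inv_eq (hΦ : D.logDeriv Φ₀ = -((k : ℚ) / 2) • D.logDeriv L)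
    (P0 P1 : ℕ → R) (Φ₁ : R)
    (hP00 : P0 0 = Φ₀) (hP10 : P1 0 = Φ₁)
    (hP0 : ∀ p, P0 (p + 1) = L * P0 p) (hP1 : ∀ p, P1 (p + 1) = L * P1 p + D (P0 p)) :
    ∑ p ∈ Finset.range (k + 1), (P0 p * ↑Φ₀⁻¹) * (P1 (k - p) * ↑Φ₀⁻¹) =
      ((k + 1 : ℕ) : R) * ↑L ^ k * (Φ₁ * ↑Φ₀⁻¹) -
        ((((k + 1 : ℕ) : ℚ) ^ 2 - 1) / 12) •
          (↑L ^ (k - 1) * (((k + 1 : ℕ) : ℚ) • D.logDeriv L)) := by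
  have hP0' (p : ℕ) : P0 p = ↑L ^ p * ↑Φ₀ := by rw [eq_pow_mul_of_forall_succ hP0, hP00]
  simp only [hP0'] at hP1
  have hterm : ∀ p ∈ Finset.range (k + 1), (P0 p * ↑Φ₀⁻¹) * (P1 (k - p) * ↑Φ₀⁻¹) =
      ↑L ^ k * (Φ₁ * ↑Φ₀⁻¹) + (((k - p : ℕ) : ℚ) * ((k - p : ℕ) - (k + 1)) / 2) •
        (D.logDeriv L * ↑L ^ k * ↑L⁻¹) := by
    intro p hp
    have hLk : (↑L ^ p * ↑L ^ (k - p) : R) = ↑L ^ k := by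
      rw [← pow_add, Nat.add_sub_cancel' (Nat.lt_succ_iff.mp (Finset.mem_range.mp hp))]
    rw [hP0', Units.mul_inv_cancel_right, eq_pow_mul_add_smul_of_succ D hΦ P1 Φ₁ hP10 hP1, add_mul,
      smul_mul_assoc, Units.mul_inv_cancel_right, mul_add, mul_smul_comm, ← hLk]
    ring_nf
  have hsum : ∑ p ∈ Finset.range (k + 1), ((k - p : ℕ) : ℚ) * ((k - p : ℕ) - (k + 1)) / 2 =
      -(((k + 1 : ℕ) : ℚ) * (((k + 1 : ℕ) : ℚ) ^ 2 - 1) / 12) := by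
    rw [← sum_range_mul_sub_div_two]
    push_cast
    exact Finset.sum_range_reflect (fun m => (m : ℚ) * (m - (k + 1)) / 2) (k + 1)
  -- at `k = 0` both sides vanish, so the truncated `k - 1` is harmless
  have hpow : (((k + 1 : ℕ) : ℚ) * (((k + 1 : ℕ) : ℚ) ^ 2 - 1) / 12) •
      (D.logDeriv L * ↑L ^ k * ↑L⁻¹) =
      ((((k + 1 : ℕ) : ℚ) ^ 2 - 1) / 12) • (↑L ^ (k - 1) * (((k + 1 : ℕ) : ℚ) • D.logDeriv L)) := by
    rcases k with _ | j
    · simp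
    · rw [pow_succ (L : R) j, ← mul_assoc, Units.mul_inv_cancel_right, mul_smul_comm, smul_smul,
        add_tsub_cancel_right, mul_comm]
      ring_nf
  rw [Finset.sum_congr rfl hterm, Finset.sum_add_distrib, Finset.sum_const, Finset.card_range,
    ← Finset.sum_smul, hsum, neg_smul, hpow, nsmul_eq_mul, ← sub_eq_add_neg, mul_assoc]

end

open PowerSeries

theorem PowerSeries.val_inv_unit {K : Type*} [Field K] (u : K⟦X⟧ˣ) : ↑u⁻¹ = (↑u : K⟦X⟧)⁻¹ :=
  Units.inv_eq_of_mul_eq_one_right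
    (PowerSeries.mul_inv_cancel _ ((u.isUnit.map (constantCoeff (R := K))).ne_zero))

noncomputable def qDerivation : Derivation ℚ ℚ⟦X⟧ ℚ⟦X⟧ := (X : ℚ⟦X⟧) • derivative ℚ

theorem Dq_eq_qDerivation : Dq = qDerivation := by
  funext f
  ext (_ | d)
  · simp [Dq, qDerivation]
  · simp [Dq, qDerivation, coeff_succ_X_mul, coeff_derivative]
    ring

theorem qDerivation_one_add_X : qDerivation (1 + X) = X := by
  simp [qDerivation]

theorem smul_logDeriv_eq_of_pow_eq_one_add_X {n : ℕ} {L : ℚ⟦X⟧ˣ}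
    (h : (↑(L ^ n) : ℚ⟦X⟧) = 1 + X) : (n : ℚ) • qDerivation.logDeriv L = 1 - ↑(L ^ n)⁻¹ := by
  rw [Nat.cast_smul_eq_nsmul, ← qDerivation.logDeriv_pow, Derivation.logDeriv, h,
    qDerivation_one_add_X,
    show (X : ℚ⟦X⟧) = ↑(L ^ n) - 1 by rw [h]; ring, sub_mul, Units.mul_inv, one_mul]

theorem stmt_3_general (n : ℕ) (hn : 1 ≤ n) (L Φ₀ Φ₁ : PowerSeries ℚ)
    (hL0 : PowerSeries.constantCoeff L = 1) (hLn : L ^ n = 1 + PowerSeries.X)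
    (hΦ₀0 : PowerSeries.constantCoeff Φ₀ = 1) (hΦ₀ : Φ₀ ^ 2 * L ^ (n - 1) = 1)
    (P0 P1 : ℕ → PowerSeries ℚ)
    (hP00 : P0 0 = Φ₀) (hP10 : P1 0 = Φ₁)
    (hP0 : ∀ p : ℕ, P0 (p + 1) = L * P0 p)
    (hP1 : ∀ p : ℕ, P1 (p + 1) = L * P1 p + Dq (P0 p)) :
    ∑ p ∈ Finset.range n, (P0 p * Φ₀⁻¹) * (P1 (n - 1 - p) * Φ₀⁻¹) =
      PowerSeries.C (n : ℚ) * L ^ (n - 1) * (Φ₁ * Φ₀⁻¹) -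
        PowerSeries.C (((n : ℚ) ^ 2 - 1) / 12) * L ^ (n - 2) * (1 - (L ^ n)⁻¹) := by
  obtain ⟨k, rfl⟩ := Nat.exists_eq_add_of_le' hn
  lift L to ℚ⟦X⟧ˣ using isUnit_iff_constantCoeff.2 (by simp [hL0])
  lift Φ₀ to ℚ⟦X⟧ˣ using isUnit_iff_constantCoeff.2 (by simp [hΦ₀0])
  rw [Dq_eq_qDerivation] at hP1
  have hΦ := logDeriv_eq_of_sq_mul_pow_eq_one qDerivation (Units.ext (by simpa using hΦ₀))
  have hL := smul_logDeriv_eq_of_pow_eq_one_add_X (by simpa using hLn)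
  rw [← val_inv_unit, ← Units.val_pow_eq_pow_val L (k + 1), ← val_inv_unit, add_tsub_cancel_right,
    sum_range_mul_inv_mul_mul_inv_eq qDerivation hΦ P0 P1 Φ₁ hP00 hP10 hP0 hP1, hL, smul_eq_C_mul,
    map_natCast, show k + 1 - 2 = k - 1 by omega]
  ring

/-- `Σ_{p=0}^{n−1} (Φ_{p;0}/Φ₀)·(Φ_{n−1−p;1}/Φ₀)
  = n·L^{n−1}·(Φ₁/Φ₀) − ((n²−1)/12)·L^{n−2}·(1 − L^{−n})` in `ℚ[[q]]`.
Here `L` is the unique power series with constant term `1` and `Lⁿ = 1+q`,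
`Φ₀` is the unique power series with constant term `1` and `Φ₀²·L^{n−1} = 1`,
`Φ₁ = ((n−1)/(24n))·(n + (n+1)·L⁻¹ − (2n+1)·L^{−(n+1)})·Φ₀`, and
`P0 p = Φ_{p;0}`, `P1 p = Φ_{p;1}` are defined by the recursions
`Φ_{0;0} = Φ₀`, `Φ_{0;1} = Φ₁`, `Φ_{p;0} = L·Φ_{p−1;0}`,
`Φ_{p;1} = L·Φ_{p−1;1} + D·Φ_{p−1;0}`. -/
theorem stmt_3 (n : ℕ) (hn : 1 ≤ n) (L Φ₀ Φ₁ : PowerSeries ℚ)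
    (hL0 : PowerSeries.constantCoeff L = 1) (hLn : L ^ n = 1 + PowerSeries.X)
    (hΦ₀0 : PowerSeries.constantCoeff Φ₀ = 1) (hΦ₀ : Φ₀ ^ 2 * L ^ (n - 1) = 1)
    (hΦ₁ : Φ₁ = PowerSeries.C (((n : ℚ) - 1) / (24 * (n : ℚ))) *
      (PowerSeries.C (n : ℚ) + PowerSeries.C ((n : ℚ) + 1) * L⁻¹ -
        PowerSeries.C (2 * (n : ℚ) + 1) * (L ^ (n + 1))⁻¹) * Φ₀)
    (P0 P1 : ℕ → PowerSeries ℚ)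
    (hP00 : P0 0 = Φ₀) (hP10 : P1 0 = Φ₁)
    (hP0 : ∀ p : ℕ, P0 (p + 1) = L * P0 p)
    (hP1 : ∀ p : ℕ, P1 (p + 1) = L * P1 p + Dq (P0 p)) :
    ∑ p ∈ Finset.range n, (P0 p * Φ₀⁻¹) * (P1 (n - 1 - p) * Φ₀⁻¹) =
      PowerSeries.C (n : ℚ) * L ^ (n - 1) * (Φ₁ * Φ₀⁻¹) -
        PowerSeries.C (((n : ℚ) ^ 2 - 1) / 12) * L ^ (n - 2) * (1 - (L ^ n)⁻¹) :=
  stmt_3_general n hn L Φ₀ Φ₁ hL0 hLn hΦ₀0 hΦ₀ P0 P1 hP00 hP10 hP0 hP1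
end

section
/- Fix an integer n ≥ 1. For every m ≥ 0 the recursively defined rational functions satisfy the closed formulas H_{m,0}(u) = 1, H_{m,1}(u) = C(m,2)·(u−1)/(nu), and H_{m,2}(u) = C(m,3)·(n + ((3m−5)/4)·(u−1))·(u−1)/(n²u²) in ℚ(u). -/
/-- Formal derivative `d/du` on `ℚ(u)`, via the quotient rule on the
numerator/denominator representation. -/
noncomputable def rderiv (r : RatFunc ℚ) : RatFunc ℚ :=
  algebraMap (Polynomial ℚ) (RatFunc ℚ)
      (Polynomial.derivative r.num * r.denom - r.num * Polynomial.derivative r.denom) /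
    algebraMap (Polynomial ℚ) (RatFunc ℚ) (r.denom ^ 2)

/-- The rational functions `H_{m,j} ∈ ℚ(u)` with parameter `n`, defined by
`H_{0,0} = 1`, `H_{m,j} = 0` unless `0 ≤ j ≤ m`, and
`H_{m,j} = H_{m−1,j} + (u−1)·(d/du + (m−j)/(nu))·H_{m−1,j−1}` for `m ≥ 1`. -/
noncomputable def Hfun (n : ℕ) : ℕ → ℕ → RatFunc ℚ
  | 0, 0 => 1
  | 0, _ + 1 => 0
  | m + 1, 0 => Hfun n m 0
  | m + 1, j + 1 =>
    if j + 1 ≤ m + 1 then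
      Hfun n m (j + 1) +
        (RatFunc.X - 1) *
          (rderiv (Hfun n m j) +
            (((m : RatFunc ℚ) - (j : RatFunc ℚ)) / ((n : RatFunc ℚ) * RatFunc.X)) *
              Hfun n m j)
    else 0

/-!
`H_{m,0} = 1` is immediate from the recursion. The truncation `j ≤ m` in the recursion is
harmless (both `H_{m,j}` and `H_{m,j+1}` vanish when `j > m`), so `H_{m,1}` and `H_{m,2}` follow
by induction on `m`. For `j = 1` the step is Pascal's rule `C(m+1,2) = C(m,2) + m`; for `j = 2`
it only needs `d/du ((u-1)/u) = 1/u²` and the closed forms of `C(m,2)` and `C(m,3)`, after which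
it is a polynomial identity in `m`, `n` and `u`.
-/

open Polynomial

theorem Nat.cast_choose_three (K : Type*) [Field K] [CharZero K] (a : ℕ) :
    (a.choose 3 : K) = a * (a - 1) * (a - 2) / 6 := by
  induction a with
  | zero => simp
  | succ a ih =>
    rw [Nat.choose_succ_succ, Nat.cast_add, ih, Nat.cast_choose_two]
    push_cast
    ring

theorem rderiv_zero : rderiv 0 = 0 := by
  simp [rderiv]

theorem rderiv_one : rderiv 1 = 0 := by
  simp [rderiv]

/-- `rderiv` reads off the reduced form `num / denom`; differentiating the cross-multiplied
identity `p * denom = q * num` shows that any other representation gives the same value. -/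
theorem rderiv_algebraMap_div (p q : ℚ[X]) (hq : q ≠ 0) :
    rderiv (algebraMap ℚ[X] (RatFunc ℚ) p / algebraMap ℚ[X] (RatFunc ℚ) q) =
      algebraMap ℚ[X] (RatFunc ℚ) (derivative p * q - p * derivative q) /
        algebraMap ℚ[X] (RatFunc ℚ) (q ^ 2) := by
  set r := algebraMap ℚ[X] (RatFunc ℚ) p / algebraMap ℚ[X] (RatFunc ℚ) q with hr
  have hq' := RatFunc.algebraMap_ne_zero hq
  have hd' := RatFunc.algebraMap_ne_zero r.denom_ne_zero
  have cross : p * r.denom = q * r.num := by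
    apply RatFunc.algebraMap_injective ℚ
    have h := r.num_div_denom
    rw [hr, div_eq_div_iff hd' hq'] at h
    simp only [map_mul]
    linear_combination -h
  have cross' := congrArg derivative cross
  rw [derivative_mul, derivative_mul] at cross'
  rw [rderiv, div_eq_div_iff (RatFunc.algebraMap_ne_zero (pow_ne_zero 2 r.denom_ne_zero))
    (RatFunc.algebraMap_ne_zero (pow_ne_zero 2 hq)), ← map_mul, ← map_mul]
  refine congrArg _ ?_
  linear_combination -(q * r.denom) * cross' +
    (derivative q * r.denom + q * derivative r.denom) * cross

theorem rderiv_mul_X_sub_one_div_mul_X (c a : ℚ) (ha : a ≠ 0) :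
    rderiv ((c : RatFunc ℚ) * (RatFunc.X - 1) / ((a : RatFunc ℚ) * RatFunc.X)) =
      (c : RatFunc ℚ) / ((a : RatFunc ℚ) * RatFunc.X ^ 2) := by
  have h := rderiv_algebraMap_div (C c * (X - 1)) (C a * X)
    (mul_ne_zero (C_ne_zero.2 ha) X_ne_zero)
  simp only [map_mul, map_sub, map_pow, map_one, RatFunc.algebraMap_C, RatFunc.algebraMap_X,
    eq_ratCast, derivative_mul, derivative_C, derivative_X, derivative_one, zero_mul, zero_add,
    sub_zero, mul_one] at h
  rw [h]
  field_simp
  ring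

section Hfun

variable (n : ℕ)

theorem Hfun_eq_zero_of_lt {m j : ℕ} (h : m < j) : Hfun n m j = 0 := by
  induction m generalizing j with
  | zero =>
    obtain ⟨j, rfl⟩ := Nat.exists_eq_succ_of_ne_zero h.ne'
    rfl
  | succ m ih =>
    obtain ⟨j, rfl⟩ := Nat.exists_eq_succ_of_ne_zero (Nat.ne_zero_of_lt h)
    rw [Hfun, if_neg (by omega)]

theorem Hfun_zero_right (m : ℕ) : Hfun n m 0 = 1 := by
  induction m with
  | zero => rfl
  | succ m ih => rwa [Hfun]

theorem Hfun_succ_succ (m j : ℕ) :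
    Hfun n (m + 1) (j + 1) = Hfun n m (j + 1) + (RatFunc.X - 1) *
      (rderiv (Hfun n m j) +
        (((m : RatFunc ℚ) - (j : RatFunc ℚ)) / ((n : RatFunc ℚ) * RatFunc.X)) * Hfun n m j) := by
  rw [Hfun]
  split_ifs
  · rfl
  · rw [Hfun_eq_zero_of_lt n (by omega : m < j), Hfun_eq_zero_of_lt n (by omega : m < j + 1),
      rderiv_zero]
    ring

theorem Hfun_one (m : ℕ) :
    Hfun n m 1 = (m.choose 2 : RatFunc ℚ) * (RatFunc.X - 1) / ((n : RatFunc ℚ) * RatFunc.X) := by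
  induction m with
  | zero => simp [Hfun]
  | succ m ih =>
    rw [Hfun_succ_succ, ih, Hfun_zero_right, rderiv_one, Nat.choose_succ_succ, Nat.choose_one_right]
    push_cast
    ring

theorem Hfun_two (hn : n ≠ 0) (m : ℕ) :
    Hfun n m 2 = (m.choose 3 : RatFunc ℚ) *
        ((n : RatFunc ℚ) + ((3 * (m : RatFunc ℚ) - 5) / 4) * (RatFunc.X - 1)) *
        (RatFunc.X - 1) / ((n : RatFunc ℚ) ^ 2 * RatFunc.X ^ 2) := by
  induction m with
  | zero => simp [Hfun]
  | succ m ih =>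
    have hderiv := rderiv_mul_X_sub_one_div_mul_X (m.choose 2) n (by exact_mod_cast hn)
    push_cast at hderiv
    rw [Hfun_succ_succ, ih, Hfun_one, hderiv, Nat.cast_choose_three, Nat.cast_choose_three,
      Nat.cast_choose_two]
    push_cast
    field_simp
    ring

end Hfun

/-- `H_{m,0}(u) = 1`, `H_{m,1}(u) = C(m,2)·(u−1)/(nu)`, and
`H_{m,2}(u) = C(m,3)·(n + ((3m−5)/4)·(u−1))·(u−1)/(n²u²)`. -/
theorem stmt_4 (n : ℕ) (hn : 1 ≤ n) (m : ℕ) :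
    Hfun n m 0 = 1 ∧
    Hfun n m 1 = (m.choose 2 : RatFunc ℚ) * (RatFunc.X - 1) /
      ((n : RatFunc ℚ) * RatFunc.X) ∧
    Hfun n m 2 = (m.choose 3 : RatFunc ℚ) *
        ((n : RatFunc ℚ) + ((3 * (m : RatFunc ℚ) - 5) / 4) * (RatFunc.X - 1)) *
        (RatFunc.X - 1) / ((n : RatFunc ℚ) ^ 2 * RatFunc.X ^ 2) :=
  ⟨Hfun_zero_right n m, Hfun_one n m, Hfun_two n (by omega) m⟩
end

section
/- Let n ≥ 1 and let R be the localization of ℚ[α₁,…,α_n] at the multiplicative set generated by σ_n = α₁⋯α_n and D_α = ∏_{j≠k}(α_j−α_k) (product over ordered pairs); let 𝓘·R be the ideal of R generated by the elementary symmetric polynomials σ₁,…,σ_{n−1}. For p ∈ ℤ set h(p) = Σ_{j=1}^{n} α_j^p · ∏_{k≠j}(α_j−α_k)^{−1} ∈ R (each α_j and each ∏_{k≠j}(α_j−α_k) is invertible in R; h(p) equals minus the sum of the residues of x^p·dx/∏_{k=1}^{n}(x−α_k) at x = 0 and x = ∞). Then: h(p) ∈ 𝓘·R whenever n does not divide p+1,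 and h(n−1+nt) − ((−1)^{n−1}σ_n)^t ∈ 𝓘·R for every t ∈ ℤ. -/
open MvPolynomial

/-- The field of fractions `ℚ(α₁,…,α_n)` of `ℚ[α₁,…,α_n]`. -/
abbrev Knn (n : ℕ) : Type := FractionRing (MvPolynomial (Fin n) ℚ)

/-- The image of `α_j` in `ℚ(α₁,…,α_n)`. -/
noncomputable def αK (n : ℕ) (j : Fin n) : Knn n :=
  algebraMap (MvPolynomial (Fin n) ℚ) (Knn n) (X j)

/-- The image of the `r`-th elementary symmetric polynomial in `ℚ(α₁,…,α_n)`. -/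
noncomputable def σK (n r : ℕ) : Knn n :=
  algebraMap (MvPolynomial (Fin n) ℚ) (Knn n) (esymm (Fin n) ℚ r)

/-- The image of `D_α = ∏_{j≠k}(α_j−α_k)` (product over ordered pairs). -/
noncomputable def DK (n : ℕ) : Knn n :=
  algebraMap (MvPolynomial (Fin n) ℚ) (Knn n)
    (∏ p ∈ Finset.univ.filter fun p : Fin n × Fin n => p.1 ≠ p.2, (X p.1 - X p.2))

/-- `h(p) = Σ_{j=1}^{n} α_j^p · ∏_{k≠j}(α_j−α_k)⁻¹` for `p ∈ ℤ`. -/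
noncomputable def hK (n : ℕ) (p : ℤ) : Knn n :=
  ∑ j : Fin n, αK n j ^ p * (∏ k ∈ Finset.univ.erase j, (αK n j - αK n k))⁻¹

/-- Membership in the localization `R` of `ℚ[α₁,…,α_n]` at the multiplicative set
generated by `σ_n` and `D_α`, viewed inside the fraction field. -/
def memR (n : ℕ) (x : Knn n) : Prop :=
  ∃ (f : MvPolynomial (Fin n) ℚ) (a b : ℕ),
    x * (σK n n ^ a * DK n ^ b) = algebraMap (MvPolynomial (Fin n) ℚ) (Knn n) f

/-- Membership in the ideal `𝓘·R` of `R` generated by `σ₁,…,σ_{n−1}`. -/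
def memI (n : ℕ) (x : Knn n) : Prop :=
  ∃ g : ℕ → Knn n, (∀ i, memR n (g i)) ∧
    x = ∑ i ∈ Finset.Icc 1 (n - 1), σK n i * g i

/-!
Let `u = (-1)^(n-1) σ_n`, a unit of `R`. Since every `α_j` is a root of
`∏_k (x - α_k) = Σ_r (-1)^r σ_r x^(n-r)`, the sums `h(p)` satisfy the linear recurrence
`Σ_r (-1)^r σ_r h(p+n-r) = 0`, whose middle terms lie in `𝓘·R`; hence `h(p+n) ≡ u h(p)`
and, since `u` is invertible, `h(q+nt) ≡ u^t h(q)` modulo `𝓘·R` for all `t ∈ ℤ`.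
For `0 ≤ s < n`, `h(s)` is the coefficient of `x^(n-1)` in the Lagrange interpolation of `x^s`
at the nodes `α_j`, i.e. `h(s) = δ_{s,n-1}`. Writing `p = s + nt` gives both claims.
-/

open Finset

noncomputable def PK (n : ℕ) (j : Fin n) : Knn n :=
  ∏ k ∈ univ.erase j, (αK n j - αK n k)

noncomputable def uK (n : ℕ) : Knn n :=
  (-1) ^ (n - 1) * σK n n

lemma Subring.inv_mem_of_mul_inv_mem {K : Type*} [Field K] (S : Subring K) {x y : K}
    (hxy : x * y ≠ 0) (hy : y ∈ S) (hxy' : (x * y)⁻¹ ∈ S) : x⁻¹ ∈ S := by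
  have : x⁻¹ = y * (x * y)⁻¹ := by
    rw [mul_inv_rev, ← mul_assoc, mul_inv_cancel₀ (right_ne_zero_of_mul hxy), one_mul]
  exact this ▸ S.mul_mem hy hxy'

lemma Subring.zpow_mem_of_inv_mem {K : Type*} [Field K] (S : Subring K) {x : K}
    (hx : x ∈ S) (hx' : x⁻¹ ∈ S) : ∀ p : ℤ, x ^ p ∈ S
  | .ofNat m => by rw [Int.ofNat_eq_natCast, zpow_natCast]; exact S.pow_mem hx m
  | .negSucc m => by rw [zpow_negSucc, ← inv_pow]; exact S.pow_mem hx' (m + 1)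

section

variable (n : ℕ)

lemma hK_eq_sum_PK (p : ℤ) : hK n p = ∑ j, αK n j ^ p * (PK n j)⁻¹ := rfl

lemma αK_injective : Function.Injective (αK n) :=
  fun _ _ h => X_injective (IsFractionRing.injective _ (Knn n) h)

lemma αK_ne_zero (j : Fin n) : αK n j ≠ 0 :=
  (map_ne_zero_iff _ (IsFractionRing.injective _ (Knn n))).2 (X_ne_zero j)

lemma PK_ne_zero (j : Fin n) : PK n j ≠ 0 :=
  prod_ne_zero_iff.2 fun _ hk => sub_ne_zero.2 ((αK_injective n).ne (ne_of_mem_erase hk).symm)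

lemma σK_zero : σK n 0 = 1 := by
  rw [σK, esymm_zero, map_one]

lemma σK_self_eq_prod : σK n n = ∏ k, αK n k := by
  have h := powersetCard_self (univ : Finset (Fin n))
  rw [card_fin] at h
  rw [σK, esymm, h, sum_singleton, map_prod]
  rfl

lemma DK_eq_prod : DK n = ∏ j, PK n j := by
  rw [DK, map_prod, prod_filter, Fintype.prod_prod_type]
  refine prod_congr rfl fun j _ => ?_
  rw [PK, ← filter_ne' univ j, prod_filter]
  refine prod_congr rfl fun k _ => ?_
  by_cases h : j = k <;> simp [h, αK, Ne, eq_comm]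

lemma σK_self_ne_zero : σK n n ≠ 0 := by
  rw [σK_self_eq_prod]
  exact prod_ne_zero_iff.2 fun k _ => αK_ne_zero n k

lemma DK_ne_zero : DK n ≠ 0 := by
  rw [DK_eq_prod]
  exact prod_ne_zero_iff.2 fun j _ => PK_ne_zero n j

lemma memR_iff (x : Knn n) : memR n x ↔
    ∃ a b : ℕ, x * (σK n n ^ a * DK n ^ b) ∈
      (algebraMap (MvPolynomial (Fin n) ℚ) (Knn n)).range := by
  simp only [memR, RingHom.mem_range, eq_comm]
  exact ⟨fun ⟨f, a, b, h⟩ => ⟨a, b, f, h⟩, fun ⟨a, b, f, h⟩ => ⟨f, a, b, h⟩⟩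

def ringR : Subring (Knn n) where
  carrier := {x | memR n x}
  zero_mem' := ⟨0, 0, 0, by simp⟩
  one_mem' := ⟨1, 0, 0, by simp⟩
  mul_mem' := by
    rintro x y ⟨f, a, b, hf⟩ ⟨g, c, d, hg⟩
    exact ⟨f * g, a + c, b + d, by rw [map_mul, ← hf, ← hg]; ring⟩
  add_mem' := by
    simp only [Set.mem_ofPred_eq, memR_iff]
    rintro x y ⟨a, b, hx⟩ ⟨c, d, hy⟩
    have hσ : σK n n ∈ (algebraMap (MvPolynomial (Fin n) ℚ) (Knn n)).range := ⟨_, rfl⟩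
    have hD : DK n ∈ (algebraMap (MvPolynomial (Fin n) ℚ) (Knn n)).range := ⟨_, rfl⟩
    refine ⟨a + c, b + d, ?_⟩
    have : (x + y) * (σK n n ^ (a + c) * DK n ^ (b + d)) =
        x * (σK n n ^ a * DK n ^ b) * (σK n n ^ c * DK n ^ d)
          + y * (σK n n ^ c * DK n ^ d) * (σK n n ^ a * DK n ^ b) := by ring
    rw [this]
    exact add_mem (mul_mem hx (mul_mem (pow_mem hσ c) (pow_mem hD d)))
      (mul_mem hy (mul_mem (pow_mem hσ a) (pow_mem hD b)))
  neg_mem' := by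
    rintro x ⟨f, a, b, hf⟩
    exact ⟨-f, a, b, by rw [map_neg, ← hf, neg_mul]⟩

lemma algebraMap_mem_ringR (f : MvPolynomial (Fin n) ℚ) :
    algebraMap (MvPolynomial (Fin n) ℚ) (Knn n) f ∈ ringR n :=
  ⟨f, 0, 0, by simp⟩

lemma inv_σK_self_mem_ringR : (σK n n)⁻¹ ∈ ringR n :=
  ⟨1, 1, 0, by rw [pow_one, pow_zero, mul_one, inv_mul_cancel₀ (σK_self_ne_zero n), map_one]⟩

lemma inv_DK_mem_ringR : (DK n)⁻¹ ∈ ringR n :=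
  ⟨1, 0, 1, by rw [pow_one, pow_zero, one_mul, inv_mul_cancel₀ (DK_ne_zero n), map_one]⟩

lemma αK_mem_ringR (j : Fin n) : αK n j ∈ ringR n :=
  algebraMap_mem_ringR n _

lemma σK_mem_ringR (r : ℕ) : σK n r ∈ ringR n :=
  algebraMap_mem_ringR n _

lemma inv_αK_mem_ringR (j : Fin n) : (αK n j)⁻¹ ∈ ringR n := by
  refine (ringR n).inv_mem_of_mul_inv_mem (y := ∏ k ∈ univ.erase j, αK n k) ?_
    (prod_mem fun k _ => αK_mem_ringR n k) ?_ <;>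
  rw [mul_prod_erase _ _ (mem_univ j), ← σK_self_eq_prod]
  exacts [σK_self_ne_zero n, inv_σK_self_mem_ringR n]

lemma inv_PK_mem_ringR (j : Fin n) : (PK n j)⁻¹ ∈ ringR n := by
  refine (ringR n).inv_mem_of_mul_inv_mem (y := ∏ k ∈ univ.erase j, PK n k) ?_
    (prod_mem fun k _ => prod_mem fun l _ => sub_mem (αK_mem_ringR n k) (αK_mem_ringR n l)) ?_ <;>
  rw [mul_prod_erase _ _ (mem_univ j), ← DK_eq_prod]
  exacts [DK_ne_zero n, inv_DK_mem_ringR n]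

lemma hK_mem_ringR (p : ℤ) : hK n p ∈ ringR n :=
  sum_mem fun j _ => mul_mem
    ((ringR n).zpow_mem_of_inv_mem (αK_mem_ringR n j) (inv_αK_mem_ringR n j) p)
    (inv_PK_mem_ringR n j)

lemma uK_ne_zero : uK n ≠ 0 :=
  mul_ne_zero (pow_ne_zero _ (neg_ne_zero.2 one_ne_zero)) (σK_self_ne_zero n)

lemma uK_mem_ringR : uK n ∈ ringR n :=
  mul_mem (pow_mem (neg_mem (one_mem _)) _) (σK_mem_ringR n n)

lemma inv_uK_mem_ringR : (uK n)⁻¹ ∈ ringR n := by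
  rw [uK, mul_inv, ← inv_pow, inv_neg_one]
  exact mul_mem (pow_mem (neg_mem (one_mem _)) _) (inv_σK_self_mem_ringR n)

variable {n}

lemma memI_zero : memI n 0 :=
  ⟨0, fun _ => zero_mem (ringR n), by simp⟩

lemma memI_add {x y : Knn n} (hx : memI n x) (hy : memI n y) : memI n (x + y) := by
  obtain ⟨g, hg, rfl⟩ := hx
  obtain ⟨g', hg', rfl⟩ := hy
  refine ⟨g + g', fun i => (ringR n).add_mem (hg i) (hg' i), ?_⟩
  simp only [Pi.add_apply, mul_add, sum_add_distrib]

lemma memI_sub {x y : Knn n} (hx : memI n x) (hy : memI n y) : memI n (x - y) := by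
  obtain ⟨g, hg, rfl⟩ := hx
  obtain ⟨g', hg', rfl⟩ := hy
  refine ⟨g - g', fun i => (ringR n).sub_mem (hg i) (hg' i), ?_⟩
  simp only [Pi.sub_apply, mul_sub, sum_sub_distrib]

lemma memI_mul {r x : Knn n} (hr : r ∈ ringR n) (hx : memI n x) : memI n (r * x) := by
  obtain ⟨g, hg, rfl⟩ := hx
  refine ⟨fun i => r * g i, fun i => (ringR n).mul_mem hr (hg i), ?_⟩
  simp only [mul_sum, mul_left_comm]

variable (n)

lemma coeff_basis_αK (j : Fin n) :
    (Lagrange.basis univ (αK n) j).coeff (n - 1) = (PK n j)⁻¹ := by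
  have hdeg : (Lagrange.nodal (univ.erase j) (αK n)).natDegree = n - 1 := by
    rw [Lagrange.natDegree_nodal, card_erase_of_mem (mem_univ j), card_fin]
  rw [Lagrange.basis_eq_prod_sub_inv_mul_nodal_div (mem_univ j),
    ← Lagrange.nodal_erase_eq_nodal_div (mem_univ j), Polynomial.coeff_C_mul, ← hdeg,
    Lagrange.nodal_monic.coeff_natDegree, mul_one, Lagrange.nodalWeight, PK, prod_inv_distrib]

lemma hK_natCast_of_lt {s : ℕ} (hs : s < n) : hK n s = if s = n - 1 then 1 else 0 := by
  have hdeg : (Polynomial.X ^ s : Polynomial (Knn n)).degree < #(univ : Finset (Fin n)) := by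
    rw [Polynomial.degree_X_pow, card_fin]
    exact_mod_cast hs
  have hcoeff := congrArg (Polynomial.coeff · (n - 1))
    (Lagrange.eq_interpolate (αK_injective n).injOn hdeg)
  simp only [Lagrange.interpolate_apply, Polynomial.finsetSum_coeff, Polynomial.coeff_C_mul,
    Polynomial.eval_pow, Polynomial.eval_X, Polynomial.coeff_X_pow, coeff_basis_αK] at hcoeff
  simp only [hK_eq_sum_PK, zpow_natCast, ← hcoeff]
  exact if_congr eq_comm rfl rfl

lemma hK_of_lt {s : ℤ} (hs0 : 0 ≤ s) (hs : s < n) : hK n s = if s = n - 1 then 1 else 0 := by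
  lift s to ℕ using hs0
  rw [hK_natCast_of_lt n (by exact_mod_cast hs)]
  congr 1
  apply propext
  omega

lemma σK_eq_esymm_map (r : ℕ) : σK n r = (univ.val.map (αK n)).esymm r := by
  simp only [σK, esymm, esymm_map_val, map_sum, map_prod]
  rfl

lemma sum_σK_mul_αK_pow_eq_zero (j : Fin n) :
    ∑ r ∈ range (n + 1), (-1) ^ r * σK n r * αK n j ^ (n - r) = 0 := by
  have h := congrArg (Polynomial.eval (αK n j))
    (Multiset.prod_X_sub_X_eq_sum_esymm (univ.val.map (αK n)))
  simp only [Multiset.map_map, Function.comp_def, Polynomial.eval_multiset_prod,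
    Multiset.card_map, card_val, card_univ, Fintype.card_fin, Polynomial.eval_finsetSum,
    Polynomial.eval_mul, Polynomial.eval_pow, Polynomial.eval_neg, Polynomial.eval_one,
    Polynomial.eval_C, Polynomial.eval_X, Polynomial.eval_sub, ← σK_eq_esymm_map] at h
  simp only [mul_assoc, ← h]
  exact prod_eq_zero (mem_univ j) (sub_self _)

lemma sum_σK_mul_hK_eq_zero (p : ℤ) :
    ∑ r ∈ range (n + 1), (-1) ^ r * σK n r * hK n (p + n - r) = 0 := by
  simp only [hK_eq_sum_PK, mul_sum]
  rw [sum_comm]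
  refine sum_eq_zero fun j _ => ?_
  calc ∑ r ∈ range (n + 1), (-1) ^ r * σK n r * (αK n j ^ (p + n - r) * (PK n j)⁻¹)
      = (∑ r ∈ range (n + 1), (-1) ^ r * σK n r * αK n j ^ (n - r)) *
          (αK n j ^ p * (PK n j)⁻¹) := by
        rw [sum_mul]
        refine sum_congr rfl fun r hr => ?_
        have hrn : r ≤ n := Nat.lt_succ_iff.mp (mem_range.mp hr)
        rw [show p + n - r = ((n - r : ℕ) : ℤ) + p by push_cast [hrn]; ring,
          zpow_add₀ (αK_ne_zero n j), zpow_natCast]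
        ring
    _ = 0 := by rw [sum_σK_mul_αK_pow_eq_zero, zero_mul]

lemma memI_hK_add_sub_uK_mul (hn : 1 ≤ n) (p : ℤ) :
    memI n (hK n (p + n) - uK n * hK n p) := by
  obtain ⟨m, rfl⟩ := Nat.exists_eq_add_of_le' hn
  have hrec := sum_σK_mul_hK_eq_zero (m + 1) p
  rw [range_eq_Ico, sum_eq_sum_Ico_succ_bot (by omega), sum_Ico_succ_top (by omega),
    Ico_add_one_right_eq_Icc] at hrec
  refine ⟨fun i => -(-1) ^ i * hK (m + 1) (p + (m + 1 : ℕ) - i),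
    fun i => (ringR _).mul_mem (neg_mem (pow_mem (neg_mem (one_mem _)) _)) (hK_mem_ringR _ _), ?_⟩
  have hsum : ∑ i ∈ Icc 1 (m + 1 - 1),
        σK (m + 1) i * (-(-1) ^ i * hK (m + 1) (p + (m + 1 : ℕ) - i))
      = -∑ i ∈ Icc 1 m, (-1) ^ i * σK (m + 1) i * hK (m + 1) (p + (m + 1 : ℕ) - i) := by
    rw [Nat.add_sub_cancel, ← sum_neg_distrib]
    exact sum_congr rfl fun i _ => by ring
  rw [hsum, uK, Nat.add_sub_cancel]
  simp only [pow_zero, one_mul, σK_zero, Nat.cast_zero, sub_zero, zero_add,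
    add_sub_cancel_right] at hrec
  linear_combination hrec

lemma memI_hK_add_mul_sub_zpow_uK_mul (hn : 1 ≤ n) (q t : ℤ) :
    memI n (hK n (q + n * t) - uK n ^ t * hK n q) := by
  have hu := uK_ne_zero n
  induction t using Int.induction_on with
  | zero => simpa using memI_zero
  | succ t ih =>
    have hstep := memI_hK_add_sub_uK_mul n hn (q + n * t)
    have : hK n (q + n * ((t : ℤ) + 1)) - uK n ^ ((t : ℤ) + 1) * hK n q
        = (hK n (q + n * t + n) - uK n * hK n (q + n * t))
          + uK n * (hK n (q + n * t) - uK n ^ (t : ℤ) * hK n q) := by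
      rw [zpow_add_one₀ hu, show q + n * ((t : ℤ) + 1) = q + n * t + n by ring]
      ring
    rw [this]
    exact memI_add hstep (memI_mul (uK_mem_ringR n) ih)
  | pred t ih =>
    have hstep := memI_hK_add_sub_uK_mul n hn (q + n * (-(t : ℤ) - 1))
    have : hK n (q + n * (-(t : ℤ) - 1)) - uK n ^ (-(t : ℤ) - 1) * hK n q
        = (uK n)⁻¹ * (hK n (q + n * -(t : ℤ)) - uK n ^ (-(t : ℤ)) * hK n q)
          - (uK n)⁻¹ * (hK n (q + n * (-(t : ℤ) - 1) + n)
            - uK n * hK n (q + n * (-(t : ℤ) - 1))) := by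
      rw [zpow_sub_one₀ hu, show q + n * (-(t : ℤ) - 1) + n = q + n * -(t : ℤ) by ring]
      field_simp
      ring
    rw [this]
    exact memI_sub (memI_mul (inv_uK_mem_ringR n) ih) (memI_mul (inv_uK_mem_ringR n) hstep)

end

/-- `h(p) ∈ 𝓘·R` whenever `n ∤ p+1`, and `h(n−1+nt) − ((−1)^{n−1}σ_n)^t ∈ 𝓘·R`
for every `t ∈ ℤ`. -/
theorem stmt_8 (n : ℕ) (hn : 1 ≤ n) :
    (∀ p : ℤ, ¬ ((n : ℤ) ∣ p + 1) → memI n (hK n p)) ∧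
    (∀ t : ℤ, memI n (hK n ((n : ℤ) - 1 + n * t) -
        ((-1 : Knn n) ^ (n - 1) * σK n n) ^ t)) := by
  have hn0 : (0 : ℤ) < n := by exact_mod_cast hn
  refine ⟨fun p hp => ?_, fun t => ?_⟩
  · have hdiv := Int.emod_add_mul_ediv p n
    have hne : p % n ≠ n - 1 := fun h => hp ⟨p / n + 1, by linarith⟩
    have := memI_hK_add_mul_sub_zpow_uK_mul n hn (p % n) (p / n)
    rwa [hdiv, hK_of_lt n (Int.emod_nonneg p hn0.ne') (Int.emod_lt_of_pos p hn0), if_neg hne,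
      mul_zero, sub_zero] at this
  · have := memI_hK_add_mul_sub_zpow_uK_mul n hn (n - 1) t
    rwa [hK_of_lt n (s := n - 1) (by omega) (by omega), if_pos rfl, mul_one] at this
end

section
/- Let n ≥ 1, let Λ = ℚ[α₁,…,α_n]^{S_n} be the ring of symmetric polynomials, and let 𝓘 ⊂ Λ be the ideal generated by the elementary symmetric polynomials σ₁,…,σ_{n−1}. Then no power of σ_n·D_α lies in 𝓘: for every k ∈ ℕ, (σ_n·D_α)^k ∉ 𝓘. -/
/-!
Evaluate at the point `(1, ζ, …, ζ^{n-1})` for a primitive `n`-th root of unity `ζ`. Its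
coordinates are the roots of `X^n - 1`, so by Vieta `σ₁, …, σ_{n-1}` vanish there while `σ_n`
does not, and `D_α` does not vanish because the coordinates are distinct. Hence every element
of `𝓘` vanishes at this point, but `(σ_n D_α)^k` does not.
-/

open MvPolynomial

theorem Multiset.esymm_card {R : Type*} [CommSemiring R] (s : Multiset R) :
    s.esymm (Multiset.card s) = s.prod := by
  simp [Multiset.esymm, Multiset.powersetCard_self]

theorem MvPolynomial.aeval_prod_X_sub_X_ne_zero {σ R S : Type*} [CommRing R] [CommRing S]
    [IsDomain S] [Algebra R S] {v : σ → S} (hv : Function.Injective v) (s : Finset (σ × σ))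
    (hs : ∀ p ∈ s, p.1 ≠ p.2) : aeval v (∏ p ∈ s, (X p.1 - X p.2) : MvPolynomial σ R) ≠ 0 := by
  rw [map_prod]
  exact Finset.prod_ne_zero_iff.2 fun p hp => by
    simpa [sub_eq_zero] using hv.ne (hs p hp)

namespace IsPrimitiveRoot

open Polynomial (nthRoots)

variable {R : Type*} [CommRing R] [IsDomain R] {n : ℕ} {ζ : R}

theorem esymm_nthRoots_one_eq_zero (hζ : IsPrimitiveRoot ζ n) {m : ℕ} (hm : 0 < m)
    (hmn : m < n) : (nthRoots n (1 : R)).esymm m = 0 := by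
  set p : Polynomial R := Polynomial.X ^ n - Polynomial.C 1
  have hdeg : p.natDegree = n := Polynomial.natDegree_X_pow_sub_C
  have hvieta := Polynomial.coeff_eq_esymm_roots_of_card (p := p)
    (by rw [hdeg]; exact hζ.card_nthRoots_one) (k := n - m) (by rw [hdeg]; omega)
  have hcoeff : p.coeff (n - m) = 0 := by
    simp only [p, Polynomial.coeff_sub, Polynomial.coeff_X_pow, Polynomial.coeff_C]
    rw [if_neg (by omega), if_neg (by omega), sub_zero]
  rw [hcoeff, hdeg, (Polynomial.monic_X_pow_sub_C (1 : R) (by omega)).leadingCoeff, one_mul,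
    Nat.sub_sub_self hmn.le] at hvieta
  exact (mul_eq_zero.mp hvieta.symm).resolve_left (pow_ne_zero _ (neg_ne_zero.mpr one_ne_zero))

theorem esymm_nthRoots_one_self_ne_zero (hζ : IsPrimitiveRoot ζ n) :
    (nthRoots n (1 : R)).esymm n ≠ 0 := by
  rcases n.eq_zero_or_pos with rfl | hn
  · simp [Multiset.esymm]
  have hprod := Multiset.esymm_card (nthRoots n (1 : R))
  rw [hζ.card_nthRoots_one] at hprod
  rw [hprod]
  exact Multiset.prod_ne_zero fun h => by simp [Polynomial.mem_nthRoots hn, hn.ne'] at h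

theorem map_univ_pow_eq_nthRoots_one (hζ : IsPrimitiveRoot ζ n) :
    (Finset.univ.val.map fun i : Fin n => ζ ^ (i : ℕ)) = nthRoots n (1 : R) := by
  simp only [hζ.nthRoots_eq (one_pow n), mul_one]
  rw [Fin.univ_val_map, List.ofFn_eq_map, ← Multiset.coe_range, Multiset.map_coe,
    ← List.map_coe_finRange_eq_range, List.map_map]
  rfl

theorem aeval_esymm_eq_esymm_nthRoots_one {A : Type*} [CommSemiring A] [Algebra A R]
    (hζ : IsPrimitiveRoot ζ n) (m : ℕ) :
    aeval (fun i : Fin n => ζ ^ (i : ℕ)) (esymm (Fin n) A m) = (nthRoots n (1 : R)).esymm m := by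
  rw [aeval_esymm_eq_multiset_esymm, hζ.map_univ_pow_eq_nthRoots_one]

end IsPrimitiveRoot

/-- Let `Λ = ℚ[α₁,…,α_n]^{S_n}` and let `𝓘 ⊂ Λ` be the ideal generated by the
elementary symmetric polynomials `σ₁,…,σ_{n−1}`.  Then no power of `σ_n·D_α`
lies in `𝓘`, where `D_α = ∏_{j≠k}(α_j−α_k)` (product over ordered pairs).
Membership in `𝓘` is spelled out: an element of `Λ` lies in `𝓘` iff it can be
written as `Σ_{i=1}^{n-1} σ_i·f_i` with each `f_i` symmetric. -/
theorem stmt_9 (n : ℕ) (hn : 1 ≤ n) (k : ℕ) :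
    ¬ ∃ f : Fin (n - 1) → MvPolynomial (Fin n) ℚ,
        (∀ i, (f i).IsSymmetric) ∧
        ((esymm (Fin n) ℚ n *
            ∏ p ∈ Finset.univ.filter fun p : Fin n × Fin n => p.1 ≠ p.2,
              (X p.1 - X p.2)) ^ k =
          ∑ i : Fin (n - 1), esymm (Fin n) ℚ ((i : ℕ) + 1) * f i) := by
  rintro ⟨f, -, heq⟩
  obtain ⟨ζ, hζ⟩ : ∃ ζ : ℂ, IsPrimitiveRoot ζ n :=
    ⟨_, Complex.isPrimitiveRoot_exp n (by omega)⟩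
  have hv : Function.Injective fun i : Fin n => ζ ^ (i : ℕ) :=
    fun i j h => Fin.ext (hζ.pow_inj i.2 j.2 h)
  have heval := congrArg (aeval fun i : Fin n => ζ ^ (i : ℕ)) heq
  simp only [map_pow, map_mul, map_sum, hζ.aeval_esymm_eq_esymm_nthRoots_one] at heval
  rw [Finset.sum_eq_zero fun i _ => by
    rw [hζ.esymm_nthRoots_one_eq_zero (Nat.succ_pos i) (by omega), zero_mul]] at heval
  exact pow_ne_zero k (mul_ne_zero hζ.esymm_nthRoots_one_self_ne_zero
    (aeval_prod_X_sub_X_ne_zero hv _ fun p hp => (Finset.mem_filter.1 hp).2)) heval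
end

section
/- Let g, N ∈ ℕ with 2g + N ≥ 3 and let Γ be a connected trivalent N-marked graph of genus g with vertex set Ver. For a family c = (c_v)_{v∈Ver} of finitely supported functions c_v: {1,2,3,…} → ℕ, set |c_v| = Σ_{r≥1} c_{v,r} and ‖c‖ = Σ_{v∈Ver} Σ_{r≥1} r·c_{v,r}. Then the family of nonnegative reals 2^{−‖c‖} · ∏_{v∈Ver} [ ((m_v(Γ)+|c_v|)! / (m_v(Γ)! · ∏_{r≥1} c_{v,r}!)) · ∏_{r≥1} (r+1)^{−c_{v,r}} ], indexed by all such families c, is summable with sum (2(1−ln 2))^{−(3g+N−2−g_Γ)}. -/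
/-- An `N`-marked graph: finite sets of vertices (`Fin nv`) and flags (`Fin nf`),
a genus function `γ`, an attaching map `η` on markings and flags, and a
partition `Edg` of the flags into two-element subsets (the edges). -/
structure MarkedGraph (N : ℕ) where
  nv : ℕ
  nf : ℕ
  γ : Fin nv → ℕ
  η : Fin N ⊕ Fin nf → Fin nv
  Edg : Finset (Finset (Fin nf))
  card_eq_two : ∀ e ∈ Edg, e.card = 2
  partition : ∀ f : Fin nf, ∃! e, e ∈ Edg ∧ f ∈ e

namespace MarkedGraph

variable {N : ℕ} (Γ : MarkedGraph N)

/-- `F̄_v(Γ) = η⁻¹(v)`, the markings and flags at a vertex `v`. -/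
def flagsAt (v : Fin Γ.nv) : Finset (Fin N ⊕ Fin Γ.nf) :=
  Finset.univ.filter fun x => Γ.η x = v

/-- Two vertices are adjacent if some edge has flags at both of them. -/
def Adj (v v' : Fin Γ.nv) : Prop :=
  ∃ e ∈ Γ.Edg, ∃ f ∈ e, ∃ f' ∈ e, Γ.η (Sum.inr f) = v ∧ Γ.η (Sum.inr f') = v'

/-- Any two distinct vertices are joined by a chain of edges. -/
def Connected : Prop :=
  ∀ v v' : Fin Γ.nv, v ≠ v' → Relation.ReflTransGen Γ.Adj v v'

/-- `val_Γ(v) = 2(γ(v)−1) + |F̄_v(Γ)| > 0` for every vertex `v`. -/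
def Trivalent : Prop :=
  ∀ v : Fin Γ.nv, 3 ≤ 2 * Γ.γ v + (Γ.flagsAt v).card

/-- The arithmetic genus `1 − |Ver| + |Edg| + Σ_v γ(v)` equals `g`. -/
def HasGenus (g : ℕ) : Prop :=
  1 - (Γ.nv : ℤ) + (Γ.Edg.card : ℤ) + ∑ v : Fin Γ.nv, (Γ.γ v : ℤ) = (g : ℤ)

/-- `m_v(Γ) = 3(γ(v)−1) + |F̄_v(Γ)|`, a natural number for trivalent graphs. -/
def mAt (v : Fin Γ.nv) : ℕ := 3 * Γ.γ v + (Γ.flagsAt v).card - 3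

end MarkedGraph

/-!
The sum factorises over the vertices. Put `x_r = 2^{-r}/(r+1)`, so that the factor `2^{-‖c‖}`
is absorbed into `∏_r x_r^{c_{v,r}}`. At a vertex with `m = m_v` and `n = |c_v|`, the coefficient
`(m+n)!/(m! ∏_r c_{v,r}!)` is `C(n+m, m)` times the multinomial coefficient of `c_v`. Summing
first over the `c_v` with `|c_v| = n` (multinomial theorem) and then over `n` (negative binomial
series) gives `(1 - s)^{-(m+1)}` with `s = Σ_{r ≥ 1} x_r = 2 ln 2 - 1`, i.e. `1 - s = 2(1 - ln 2)`.
Finally `Σ_v (m_v + 1) = 3g + N - 2 - g_Γ`: there are `N + 2|Edg|` flags and markings in total,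
and the genus formula eliminates `Σ_v γ(v)`.
-/

open Finset
open scoped ENNReal Nat

namespace Finset

theorem sum_finsuppAntidiag_multinomial_mul_prod_pow {ι R : Type*} [DecidableEq ι]
    [CommSemiring R] (s : Finset ι) (x : ι → R) (n : ℕ) :
    ∑ d ∈ s.finsuppAntidiag n, (d.multinomial : R) * ∏ i ∈ d.support, x i ^ d i =
      (∑ i ∈ s, x i) ^ n := by
  rw [sum_pow_eq_sum_piAntidiag]
  refine sum_bij (fun d _ => ⇑d) (fun d hd => ?_) (fun _ _ _ _ h => DFunLike.coe_injective h)
    (fun k hk => ?_) (fun d hd => ?_)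
  · obtain ⟨hsum, hsupp⟩ := mem_finsuppAntidiag.1 hd
    exact mem_piAntidiag.2 ⟨hsum, fun i hi => hsupp (Finsupp.mem_support_iff.2 hi)⟩
  · obtain ⟨hsum, hsupp⟩ := mem_piAntidiag.1 hk
    exact ⟨Finsupp.onFinset s k hsupp,
      mem_finsuppAntidiag.2 ⟨hsum, Finsupp.support_onFinset_subset⟩, rfl⟩
  · have hsupp := (mem_finsuppAntidiag.1 hd).2
    rw [Finsupp.multinomial_eq_of_support_subset hsupp,
      prod_subset hsupp fun i _ hi => by rw [Finsupp.notMem_support_iff.1 hi, pow_zero]]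

end Finset

namespace ENNReal

variable {ι : Type*}

theorem tsum_subtype_degree_eq_multinomial_mul_prod_pow (x : ι → ℝ≥0∞) (n : ℕ) :
    ∑' d : {d : ι →₀ ℕ // d.degree = n},
        (d.1.multinomial : ℝ≥0∞) * ∏ i ∈ d.1.support, x i ^ d.1 i = (∑' i, x i) ^ n := by
  classical
  have hcofinal (t : Finset {d : ι →₀ ℕ // d.degree = n}) :
      ∃ s : Finset ι, t ⊆ (s.finsuppAntidiag n).subtype (·.degree = n) :=
    ⟨t.sup (·.1.support), fun d hd =>
      mem_subtype.2 <| mem_finsuppAntidiag'.2 ⟨d.2, le_sup (f := (·.1.support)) hd⟩⟩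
  rw [ENNReal.tsum_eq_iSup_sum' _ hcofinal, ENNReal.tsum_eq_iSup_sum, ENNReal.iSup_pow]
  refine iSup_congr fun s => ?_
  rw [← sum_finsuppAntidiag_multinomial_mul_prod_pow]
  exact sum_subtype_of_mem
    (fun d : ι →₀ ℕ => (d.multinomial : ℝ≥0∞) * ∏ i ∈ d.support, x i ^ d i)
    fun d hd => (mem_finsuppAntidiag'.1 hd).1

theorem tsum_mul_multinomial_mul_prod_pow (a : ℕ → ℝ≥0∞) (x : ι → ℝ≥0∞) :
    ∑' d : ι →₀ ℕ, a d.degree * d.multinomial * ∏ i ∈ d.support, x i ^ d i =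
      ∑' n, a n * (∑' i, x i) ^ n := by
  rw [← (Equiv.sigmaFiberEquiv Finsupp.degree).tsum_eq, ENNReal.tsum_sigma']
  refine tsum_congr fun n => ?_
  simp only [Equiv.sigmaFiberEquiv_apply]
  calc ∑' d : {d : ι →₀ ℕ // d.degree = n},
        a d.1.degree * d.1.multinomial * ∏ i ∈ d.1.support, x i ^ d.1 i
      = ∑' d : {d : ι →₀ ℕ // d.degree = n},
        a n * (d.1.multinomial * ∏ i ∈ d.1.support, x i ^ d.1 i) :=
        tsum_congr fun d => by rw [d.2, mul_assoc]
    _ = a n * (∑' i, x i) ^ n := by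
        rw [ENNReal.tsum_mul_left, tsum_subtype_degree_eq_multinomial_mul_prod_pow]

end ENNReal

theorem Finsupp.add_choose_mul_multinomial_mul_factorial {ι : Type*} (m : ℕ) (d : ι →₀ ℕ) :
    (d.degree + m).choose m * d.multinomial * (m ! * ∏ i ∈ d.support, (d i)!) =
      (m + d.degree)! := by
  rw [Nat.add_comm m, ← Nat.add_choose_mul_factorial_mul_factorial, Finsupp.degree_apply,
    ← Nat.multinomial_spec, ← Finsupp.multinomial_eq]
  ring

theorem hasSum_add_factorial_div_mul_prod_pow {ι : Type*} {x : ι → ℝ} (hx : ∀ i, 0 ≤ x i)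
    {s : ℝ} (hs : HasSum x s) (hs1 : s < 1) (m : ℕ) :
    HasSum (fun d : ι →₀ ℕ => ((m + ∑ i ∈ d.support, d i)! : ℝ) /
        (m ! * ∏ i ∈ d.support, ((d i)! : ℝ)) * ∏ i ∈ d.support, x i ^ d i)
      ((1 - s)⁻¹ ^ (m + 1)) := by
  have hs0 : 0 ≤ s := hs.nonneg hx
  -- The rearrangements are done in `ℝ≥0∞`, where every series converges.
  set F : (ι →₀ ℕ) → ℝ≥0∞ := fun d =>
    ((d.degree + m).choose m : ℝ≥0∞) * d.multinomial * ∏ i ∈ d.support, ENNReal.ofReal (x i) ^ d i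
  have hF : ∑' d, F d = ENNReal.ofReal ((1 - s)⁻¹ ^ (m + 1)) := by
    have hgeom := hasSum_choose_mul_geometric_of_norm_lt_one (𝕜 := ℝ) m
      (by rwa [Real.norm_of_nonneg hs0])
    rw [ENNReal.tsum_mul_multinomial_mul_prod_pow (fun n => ((n + m).choose m : ℝ≥0∞)),
      ← ENNReal.ofReal_tsum_of_nonneg hx hs.summable, hs.tsum_eq, inv_pow, ← one_div,
      ← hgeom.tsum_eq, ENNReal.ofReal_tsum_of_nonneg (fun n => by positivity) hgeom.summable]
    refine tsum_congr fun n => ?_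
    rw [ENNReal.ofReal_mul (by positivity), ENNReal.ofReal_natCast, ENNReal.ofReal_pow hs0]
  have hterm (d : ι →₀ ℕ) : (F d).toReal = ((m + ∑ i ∈ d.support, d i)! : ℝ) /
        (m ! * ∏ i ∈ d.support, ((d i)! : ℝ)) * ∏ i ∈ d.support, x i ^ d i := by
    have hpos : (0 : ℝ) < m ! * ∏ i ∈ d.support, ((d i)! : ℝ) := by positivity
    simp only [F, ENNReal.toReal_mul, ENNReal.toReal_natCast, ENNReal.toReal_prod,
      ENNReal.toReal_pow, ENNReal.toReal_ofReal (hx _)]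
    congr 1
    rw [eq_div_iff hpos.ne']
    exact_mod_cast d.add_choose_mul_multinomial_mul_factorial m
  have hFne (d : ι →₀ ℕ) : F d ≠ ∞ := by simp [F, ENNReal.mul_ne_top, ENNReal.prod_ne_top]
  have hsum := ENNReal.hasSum_toReal (hF ▸ ENNReal.ofReal_ne_top)
  rwa [← ENNReal.tsum_toReal_eq hFne, hF, ENNReal.toReal_ofReal (by positivity),
    funext hterm] at hsum

theorem hasSum_pi_fin_prod_of_nonneg {α : Type*} {n : ℕ} {f : Fin n → α → ℝ} {a : Fin n → ℝ}
    (hf : ∀ i, 0 ≤ f i) (h : ∀ i, HasSum (f i) (a i)) :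
    HasSum (fun c : Fin n → α => ∏ i, f i (c i)) (∏ i, a i) := by
  induction n with
  | zero => simp
  | succ n ih =>
    rw [← (Fin.consEquiv fun _ => α).hasSum_iff]
    simp only [Function.comp_def, Fin.consEquiv_apply, Fin.prod_univ_succ, Fin.cons_zero,
      Fin.cons_succ]
    have htail := ih (fun i => hf i.succ) (fun i => h i.succ)
    have hsummable := (h 0).summable.mul_of_nonneg htail.summable (hf 0)
      fun c => prod_nonneg fun i _ => hf i.succ (c i)
    exact ((h 0).mul htail hsummable :)

theorem hasSum_inv_two_pow_div_succ :
    HasSum (fun r : ℕ+ => (2 : ℝ)⁻¹ ^ (r : ℕ) / ((r : ℕ) + 1)) (2 * Real.log 2 - 1) := by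
  have hlog := Real.hasSum_pow_div_log_of_abs_lt_one (x := (2 : ℝ)⁻¹) (by norm_num [abs_of_pos])
  have htail := ((hasSum_nat_add_iff' 1).mpr hlog).mul_left 2
  have hval : 2 * (-Real.log (1 - 2⁻¹) - ∑ i ∈ range 1, (2 : ℝ)⁻¹ ^ (i + 1) / (i + 1)) =
      2 * Real.log 2 - 1 := by
    rw [show (1 : ℝ) - 2⁻¹ = 2⁻¹ by norm_num, Real.log_inv]
    norm_num
    ring
  refine Equiv.pnatEquivNat.symm.hasSum_iff.mp ?_
  rw [hval] at htail
  refine htail.congr_fun fun k => ?_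
  simp only [Function.comp_apply, Equiv.pnatEquivNat_symm_apply, Nat.succPNat_coe,
    Nat.succ_eq_add_one]
  push_cast
  ring

theorem prod_inv_two_pow_div_succ_pow (d : ℕ+ →₀ ℕ) :
    ∏ r ∈ d.support, ((2 : ℝ)⁻¹ ^ (r : ℕ) / ((r : ℕ) + 1)) ^ d r =
      ((2 : ℝ) ^ (∑ r ∈ d.support, (r : ℕ) * d r))⁻¹ *
        (∏ r ∈ d.support, (((r : ℕ) : ℝ) + 1) ^ d r)⁻¹ := by
  simp only [div_pow, ← pow_mul]
  rw [prod_div_distrib, prod_pow_eq_pow_sum, inv_pow, div_eq_mul_inv]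

namespace MarkedGraph

variable {N : ℕ} (Γ : MarkedGraph N)

theorem sum_card_flagsAt : ∑ v, (Γ.flagsAt v).card = N + Γ.nf :=
  (card_eq_sum_card_fiberwise fun x _ => mem_univ (Γ.η x)).symm.trans (by simp)

theorem two_mul_card_Edg : 2 * Γ.Edg.card = Γ.nf := by
  have h := sum_card (B := Γ.Edg) (n := 1) fun f => by
    rw [card_eq_one_iff_existsUnique]
    simpa only [mem_filter] using Γ.partition f
  rw [sum_congr rfl Γ.card_eq_two, sum_const, smul_eq_mul, Fintype.card_fin, mul_one] at h
  omega

theorem sum_mAt_add_one {g : ℕ} (htri : Γ.Trivalent) (hgen : Γ.HasGenus g) :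
    ((∑ v, (Γ.mAt v + 1) : ℕ) : ℤ) = 3 * g + N - 2 - (1 - Γ.nv + Γ.Edg.card) := by
  have hv (v : Fin Γ.nv) : Γ.mAt v + 1 + 2 = 3 * Γ.γ v + (Γ.flagsAt v).card := by
    have := htri v
    unfold mAt
    omega
  have hsum : ∑ v, (Γ.mAt v + 1) + 2 * Γ.nv = 3 * ∑ v, Γ.γ v + (N + Γ.nf) := by
    rw [← Γ.sum_card_flagsAt, mul_sum, ← sum_add_distrib]
    simp only [← hv, sum_add_distrib, sum_const, card_univ, Fintype.card_fin, smul_eq_mul]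
    ring
  have hnf := Γ.two_mul_card_Edg
  unfold HasGenus at hgen
  zify at hsum hnf
  push_cast at hsum ⊢
  omega

end MarkedGraph

theorem stmt_10_general (g N : ℕ) (Γ : MarkedGraph N) (htri : Γ.Trivalent) (hgen : Γ.HasGenus g) :
    HasSum
      (fun c : Fin Γ.nv → (ℕ+ →₀ ℕ) =>
        ((2 : ℝ) ^ (∑ v : Fin Γ.nv, ∑ r ∈ (c v).support, (r : ℕ) * c v r))⁻¹ *
          ∏ v : Fin Γ.nv,
            (((Γ.mAt v + ∑ r ∈ (c v).support, c v r).factorial : ℝ) /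
                ((Γ.mAt v).factorial *
                  ∏ r ∈ (c v).support, ((c v r).factorial : ℝ)) *
              (∏ r ∈ (c v).support, (((r : ℕ) : ℝ) + 1) ^ (c v r))⁻¹))
      ((2 * (1 - Real.log 2)) ^
        (-(3 * (g : ℤ) + (N : ℤ) - 2 - (1 - (Γ.nv : ℤ) + (Γ.Edg.card : ℤ))))) := by
  have hs1 : 2 * Real.log 2 - 1 < 1 := by linarith [Real.log_two_lt_d9]
  have hvertex (v : Fin Γ.nv) := hasSum_add_factorial_div_mul_prod_pow (fun r => by positivity)
    hasSum_inv_two_pow_div_succ hs1 (Γ.mAt v)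
  have hprod := hasSum_pi_fin_prod_of_nonneg (fun v d => by positivity) hvertex
  rw [prod_pow_eq_pow_sum, show 1 - (2 * Real.log 2 - 1) = 2 * (1 - Real.log 2) by ring,
    inv_pow, ← zpow_natCast, ← zpow_neg, Γ.sum_mAt_add_one htri hgen] at hprod
  convert hprod using 2 with c
  simp only [prod_inv_two_pow_div_succ_pow, prod_mul_distrib, prod_inv_distrib,
    prod_pow_eq_pow_sum]
  ring

/-- Let `Γ` be a connected trivalent `N`-marked graph of genus `g` (`2g+N ≥ 3`).
The family
`2^{−‖c‖}·∏_{v∈Ver} [((m_v(Γ)+|c_v|)!/(m_v(Γ)!·∏_{r≥1} c_{v,r}!))·∏_{r≥1}(r+1)^{−c_{v,r}}]`,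
indexed by all families `c = (c_v)_{v∈Ver}` of finitely supported functions
`c_v : {1,2,3,…} → ℕ`, is summable with sum `(2(1−ln 2))^{−(3g+N−2−g_Γ)}`,
where `g_Γ = 1 − |Ver| + |Edg|` and `‖c‖ = Σ_v Σ_r r·c_{v,r}`. -/
theorem stmt_10 (g N : ℕ) (hgN : 3 ≤ 2 * g + N) (Γ : MarkedGraph N)
    (hconn : Γ.Connected) (htri : Γ.Trivalent) (hgen : Γ.HasGenus g) :
    HasSum
      (fun c : Fin Γ.nv → (ℕ+ →₀ ℕ) =>
        ((2 : ℝ) ^ (∑ v : Fin Γ.nv, ∑ r ∈ (c v).support, (r : ℕ) * c v r))⁻¹ *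
          ∏ v : Fin Γ.nv,
            (((Γ.mAt v + ∑ r ∈ (c v).support, c v r).factorial : ℝ) /
                ((Γ.mAt v).factorial *
                  ∏ r ∈ (c v).support, ((c v r).factorial : ℝ)) *
              (∏ r ∈ (c v).support, (((r : ℕ) : ℝ) + 1) ^ (c v r))⁻¹))
      ((2 * (1 - Real.log 2)) ^
        (-(3 * (g : ℤ) + (N : ℤ) - 2 - (1 - (Γ.nv : ℤ) + (Γ.Edg.card : ℤ))))) :=
  stmt_10_general g N Γ htri hgen
end

section
/- For every m ∈ ℕ, the family of nonnegative reals 2^{−Σ_{r≥1} r·c_r} · ((m+|c|)! / (m! · ∏_{r≥1} c_r!)) · ∏_{r≥1} (r+1)^{−c_r}, indexed by all finitely supported functions c: {1,2,3,…} → ℕ (with |c| = Σ_{r≥1} c_r), is summable with sum (2(1−ln 2))^{−(m+1)}. -/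
/-!
Write `y r = 2⁻ʳ (r + 1)⁻¹` and `|c| = ∑ r, c r`. The summand equals
`C(|c| + m, m) · multinomial(c) · ∏ r, y r ^ c r`. Grouping the `c` by `|c| = n`, the multinomial
theorem turns the inner sum into `s ^ n` with `s = ∑_{r ≥ 1} y r = 2 ln 2 - 1` (the series of
`-ln (1 - x)` at `x = 1/2`, less its first term, doubled), and the negative binomial series gives
`∑ n, C(n + m, m) s ^ n = (1 - s)^{-(m+1)} = (2 (1 - ln 2))^{-(m+1)}`. All terms are nonnegative,
so the rearrangement is justified by summing in `ℝ≥0∞`.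
-/

open Finset ENNReal

theorem Finset.sum_pow_eq_sum_finsuppAntidiag {ι R : Type*} [DecidableEq ι] [CommSemiring R]
    (s : Finset ι) (f : ι → R) (n : ℕ) :
    (∑ i ∈ s, f i) ^ n =
      ∑ c ∈ s.finsuppAntidiag n, (c.multinomial : R) * ∏ i ∈ c.support, f i ^ c i := by
  rw [sum_pow_eq_sum_piAntidiag, finsuppAntidiag, sum_map, ← sum_attach (piAntidiag s n)]
  refine sum_congr rfl fun k _ => ?_
  set c : ι →₀ ℕ := ⟨s.filter (k.1 · ≠ 0), k.1, by simpa using (mem_piAntidiag.1 k.2).2⟩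
  have hc : c.support ⊆ s := filter_subset _ _
  show _ = (c.multinomial : R) * ∏ i ∈ c.support, f i ^ c i
  rw [← Finsupp.multinomial_of_support_subset hc, prod_subset hc fun i _ hi => by
    rw [Finsupp.notMem_support_iff.1 hi, pow_zero]]
  rfl

theorem ENNReal.tsum_fiber_degree_multinomial_mul_prod_pow {ι : Type*} (x : ι → ℝ≥0∞) (n : ℕ) :
    ∑' c : Finsupp.degree ⁻¹' {n}, (c.1.multinomial : ℝ≥0∞) * ∏ i ∈ c.1.support, x i ^ c.1 i =
      (∑' i, x i) ^ n := by
  classical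
  have hdegree : ∀ s : Finset ι, ∀ c ∈ s.finsuppAntidiag n, c ∈ Finsupp.degree ⁻¹' {n} := by
    intro s c hc
    rw [mem_finsuppAntidiag] at hc
    simp [Finsupp.degree_apply, ← hc.1,
      sum_subset hc.2 fun i _ hi => Finsupp.notMem_support_iff.1 hi]
  have hcover : ∀ t : Finset (Finsupp.degree ⁻¹' {n}), ∃ s : Finset ι,
      t ⊆ (s.finsuppAntidiag n).subtype (· ∈ Finsupp.degree ⁻¹' {n}) := by
    refine fun t => ⟨t.biUnion fun c => c.1.support, fun c hc => ?_⟩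
    have hsupp : c.1.support ⊆ t.biUnion fun c => c.1.support :=
      subset_biUnion_of_mem (fun c : Finsupp.degree ⁻¹' {n} => c.1.support) hc
    rw [mem_subtype, mem_finsuppAntidiag,
      ← sum_subset hsupp fun i _ hi => Finsupp.notMem_support_iff.1 hi]
    exact ⟨c.2, hsupp⟩
  rw [ENNReal.tsum_eq_iSup_sum' _ hcover, ENNReal.tsum_eq_iSup_sum, ENNReal.iSup_pow]
  refine iSup_congr fun s => ?_
  rw [sum_subtype_of_mem
      (fun c : ι →₀ ℕ => (c.multinomial : ℝ≥0∞) * ∏ i ∈ c.support, x i ^ c i) (hdegree s),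
    sum_pow_eq_sum_finsuppAntidiag]

theorem ENNReal.tsum_mul_degree_multinomial_mul_prod_pow {ι : Type*} (t : ℕ → ℝ≥0∞)
    (x : ι → ℝ≥0∞) :
    ∑' c : ι →₀ ℕ, t c.degree * c.multinomial * ∏ i ∈ c.support, x i ^ c i =
      ∑' n, t n * (∑' i, x i) ^ n := by
  rw [← ENNReal.tsum_fiberwise _ Finsupp.degree]
  refine tsum_congr fun n => ?_
  rw [← tsum_fiber_degree_multinomial_mul_prod_pow, ← ENNReal.tsum_mul_left]
  refine tsum_congr fun c => ?_
  rw [c.2, mul_assoc]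

theorem ENNReal.tsum_choose_mul_ofReal_pow {s : ℝ} (hs0 : 0 ≤ s) (hs1 : s < 1) (m : ℕ) :
    ∑' n, ((n + m).choose m : ℝ≥0∞) * ENNReal.ofReal s ^ n =
      ENNReal.ofReal ((1 - s) ^ (m + 1))⁻¹ := by
  have hgeo := hasSum_choose_mul_geometric_of_norm_lt_one m
    (by rwa [Real.norm_eq_abs, abs_of_nonneg hs0] : ‖s‖ < 1)
  rw [← one_div, ← hgeo.tsum_eq,
    ENNReal.ofReal_tsum_of_nonneg (fun n => by positivity) hgeo.summable]
  refine tsum_congr fun n => ?_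
  rw [ENNReal.ofReal_mul (by positivity), ENNReal.ofReal_natCast, ENNReal.ofReal_pow hs0]

theorem hasSum_of_tsum_ofReal_eq {α : Type*} {f : α → ℝ} {a : ℝ} (hf : ∀ i, 0 ≤ f i)
    (ha : 0 ≤ a) (h : ∑' i, ENNReal.ofReal (f i) = ENNReal.ofReal a) : HasSum f a := by
  have := ENNReal.hasSum_toReal (h ▸ ENNReal.ofReal_ne_top)
  rw [← ENNReal.tsum_toReal_eq fun _ => ENNReal.ofReal_ne_top, h, ENNReal.toReal_ofReal ha] at this
  simpa only [ENNReal.toReal_ofReal (hf _)] using this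

theorem hasSum_choose_add_degree_mul_multinomial_mul_prod_pow {ι : Type*} {y : ι → ℝ}
    (hy : ∀ i, 0 ≤ y i) {s : ℝ} (hs : HasSum y s) (hs1 : s < 1) (m : ℕ) :
    HasSum (fun c : ι →₀ ℕ => ((c.degree + m).choose m : ℝ) * c.multinomial *
      ∏ i ∈ c.support, y i ^ c i) ((1 - s) ^ (m + 1))⁻¹ := by
  have hs0 : 0 ≤ s := hs.nonneg hy
  refine hasSum_of_tsum_ofReal_eq
    (fun c => mul_nonneg (by positivity) (prod_nonneg fun i _ => pow_nonneg (hy i) _))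
    (inv_nonneg.2 (pow_nonneg (by linarith) _)) ?_
  have hofReal : ∀ c : ι →₀ ℕ, ENNReal.ofReal (((c.degree + m).choose m : ℝ) * c.multinomial *
      ∏ i ∈ c.support, y i ^ c i) = ((c.degree + m).choose m : ℝ≥0∞) * c.multinomial *
      ∏ i ∈ c.support, ENNReal.ofReal (y i) ^ c i := fun c => by
    rw [ENNReal.ofReal_mul (by positivity), ENNReal.ofReal_mul (by positivity),
      ENNReal.ofReal_prod_of_nonneg fun i _ => pow_nonneg (hy i) _]
    simp only [ENNReal.ofReal_natCast, ENNReal.ofReal_pow (hy _)]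
  simp_rw [hofReal]
  rw [tsum_mul_degree_multinomial_mul_prod_pow (fun n => ((n + m).choose m : ℝ≥0∞)),
    ← ENNReal.ofReal_tsum_of_nonneg hy hs.summable, hs.tsum_eq,
    tsum_choose_mul_ofReal_pow hs0 hs1]

theorem Finsupp.add_degree_factorial_div_eq_choose_mul_multinomial {ι : Type*} (c : ι →₀ ℕ)
    (m : ℕ) :
    ((m + c.degree).factorial : ℝ) / (m.factorial * ∏ i ∈ c.support, ((c i).factorial : ℝ)) =
      (c.degree + m).choose m * c.multinomial := by
  have hspec := Nat.multinomial_spec c.support c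
  rw [← Finsupp.degree_apply, ← Finsupp.multinomial_eq] at hspec
  have hfac : (c.degree + m).choose m * c.multinomial *
      (m.factorial * ∏ i ∈ c.support, (c i).factorial) = (m + c.degree).factorial := by
    rw [add_comm, Nat.choose_symm_add, ← Nat.add_choose_mul_factorial_mul_factorial, ← hspec]
    ring
  rw [div_eq_iff (by positivity)]
  exact_mod_cast hfac.symm

theorem inv_pow_sum_mul_inv_prod_pow {ι K : Type*} [Field K] (s : Finset ι) (b : K)
    (w k : ι → ℕ) (a : ι → K) :
    (b ^ ∑ i ∈ s, w i * k i)⁻¹ * (∏ i ∈ s, a i ^ k i)⁻¹ =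
      ∏ i ∈ s, ((b ^ w i)⁻¹ * (a i)⁻¹) ^ k i := by
  rw [← prod_pow_eq_pow_sum]
  simp only [mul_pow, prod_mul_distrib, inv_pow, ← pow_mul, Finset.prod_inv_distrib]

theorem hasSum_inv_two_pow_mul_inv_succ :
    HasSum (fun r : ℕ+ => ((2 : ℝ) ^ (r : ℕ))⁻¹ * (((r : ℕ) : ℝ) + 1)⁻¹)
      (2 * Real.log 2 - 1) := by
  set a : ℕ → ℝ := fun n => (2 : ℝ)⁻¹ ^ (n + 1) / (n + 1) with ha
  have hlog : HasSum a (Real.log 2) := by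
    convert Real.hasSum_pow_div_log_of_abs_lt_one (x := (2 : ℝ)⁻¹) (by norm_num [abs_of_pos])
    rw [show (1 : ℝ) - 2⁻¹ = 2⁻¹ by norm_num, Real.log_inv, neg_neg]
  have hterm : (fun r : ℕ+ => ((2 : ℝ) ^ (r : ℕ))⁻¹ * (((r : ℕ) : ℝ) + 1)⁻¹) ∘
      Equiv.pnatEquivNat.symm = fun n => 2 * a (n + 1) := by
    funext n
    simp only [ha, Function.comp_apply, Equiv.pnatEquivNat_symm_apply, Nat.succPNat_coe,
      Nat.succ_eq_add_one, ← inv_pow]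
    push_cast
    ring
  rw [← Equiv.pnatEquivNat.symm.hasSum_iff, hterm,
    show 2 * Real.log 2 - 1 = 2 * (Real.log 2 - ∑ i ∈ range 1, a i) by norm_num [ha]; ring]
  exact ((hasSum_nat_add_iff' 1).2 hlog).mul_left 2

/-- For every `m ∈ ℕ`, the family
`2^{−Σ_{r≥1} r·c_r}·((m+|c|)!/(m!·∏_{r≥1} c_r!))·∏_{r≥1}(r+1)^{−c_r}`,
indexed by all finitely supported `c : {1,2,3,…} → ℕ` (with `|c| = Σ_r c_r`),
is summable with sum `(2(1−ln 2))^{−(m+1)}`. -/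
theorem stmt_13 (m : ℕ) :
    HasSum
      (fun c : ℕ+ →₀ ℕ =>
        ((2 : ℝ) ^ (∑ r ∈ c.support, (r : ℕ) * c r))⁻¹ *
          (((m + ∑ r ∈ c.support, c r).factorial : ℝ) /
            ((m.factorial : ℝ) * ∏ r ∈ c.support, ((c r).factorial : ℝ))) *
          (∏ r ∈ c.support, (((r : ℕ) : ℝ) + 1) ^ (c r))⁻¹)
      ((2 * (1 - Real.log 2)) ^ (m + 1))⁻¹ := by
  have hlog : Real.log 2 < 1 := Real.log_two_lt_d9.trans (by norm_num)
  convert hasSum_choose_add_degree_mul_multinomial_mul_prod_pow (fun r => by positivity)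
    hasSum_inv_two_pow_mul_inv_succ (by linarith) m using 1
  · funext c
    rw [← Finsupp.degree_apply, Finsupp.add_degree_factorial_div_eq_choose_mul_multinomial,
      ← inv_pow_sum_mul_inv_prod_pow]
    ring
  · ring
end

section
/- For every finitely supported c: {1,2,3,…} → ℕ and all B, M ∈ ℕ: Σ_{b′ ∈ ℕ^{S(c)}} (−1)^{|b′|} · C(B+|b′|, M+|c|) · ∏_{(r,j)∈S(c)} C(r, b′_{r,j}) = (−1)^{‖c‖} · C(B, M+|c|−‖c‖). (The sum is finite since C(r, b′_{r,j}) = 0 for b′_{r,j} > r; the binomial coefficient C(B, M+|c|−‖c‖) is 0 if M+|c|−‖c‖ < 0. In the paper this is used with M = m−3 for m ≥ 3 and with M = m−1 for m ≥ 1.) -/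
/-- The index set `S(c) = {(r,j) : r ≥ 1, 1 ≤ j ≤ c_r}` of a finitely supported
`c : ℕ → ℕ` (with `c 0 = 0`). -/
def Sc (c : ℕ →₀ ℕ) : Finset (ℕ × ℕ) :=
  c.support.biUnion fun r => (Finset.Icc 1 (c r)).image fun j => (r, j)

/-!
Write `E` for the shift `g ↦ g (· + 1)` and `Δ = E - 1`. The signed binomial weights attached to
`b'` are the coefficients of `X ^ |b'|` in `∏_{(r,j)} (1 - X) ^ r = (1 - X) ^ ‖c‖`, so evaluating at
`X = E` turns the sum into `(-1) ^ ‖c‖ Δ ^ ‖c‖` applied to `x ↦ C(x, M + |c|)` at `B`. Since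
`Δ C(x, N + 1) = C(x, N)`, this is `(-1) ^ ‖c‖ C(B, M + |c| - ‖c‖)`, and `0` once `‖c‖` exceeds
`M + |c|`.
-/

open Finset fwdDiff fwdDiff_aux

theorem one_sub_pow_eq_sum_range {R : Type*} [CommRing R] (x : R) (n : ℕ) :
    (1 - x) ^ n = ∑ k ∈ range (n + 1), ((-1) ^ k * n.choose k : ℤ) • x ^ k := by
  rw [sub_eq_neg_add, add_pow]
  refine sum_congr rfl fun k _ => ?_
  rw [neg_pow, zsmul_eq_mul]
  push_cast
  ring

theorem one_sub_pow_sum_eq_sum_piFinset {R ι : Type*} [CommRing R] [Fintype ι] [DecidableEq ι]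
    (f : ι → ℕ) (x : R) :
    (1 - x) ^ (∑ i, f i) = ∑ b ∈ Fintype.piFinset (fun i => range (f i + 1)),
      ((-1) ^ (∑ i, b i) * ∏ i, ((f i).choose (b i) : ℤ)) • x ^ (∑ i, b i) := by
  simp_rw [← prod_pow_eq_pow_sum, one_sub_pow_eq_sum_range, prod_univ_sum, zsmul_eq_mul]
  refine sum_congr rfl fun b _ => ?_
  push_cast
  rw [prod_mul_distrib, prod_mul_distrib]

theorem sum_piFinset_shift_eq_fwdDiff_iter {ι G : Type*} [Fintype ι] [DecidableEq ι]
    [AddCommGroup G] (f : ι → ℕ) (g : ℕ → G) (y : ℕ) :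
    ∑ b ∈ Fintype.piFinset (fun i => range (f i + 1)),
      ((-1) ^ (∑ i, b i) * ∏ i, ((f i).choose (b i) : ℤ)) • g (y + ∑ i, b i) =
      (-1) ^ (∑ i, f i) • Δ_[1] ^[∑ i, f i] g y := by
  have h := congr_arg (fun p : Polynomial ℤ => Polynomial.aeval (shiftₗ ℕ G 1) p g y)
    (one_sub_pow_sum_eq_sum_piFinset f Polynomial.X)
  have hΔ : 1 - shiftₗ ℕ G 1 = -fwdDiffₗ ℕ G 1 := by simp [shiftₗ]
  simp only [map_pow, map_sub, map_one, Polynomial.aeval_X, hΔ, map_sum, map_zsmul,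
    LinearMap.sum_apply, Finset.sum_apply, LinearMap.smul_apply, Pi.smul_apply, shiftₗ_pow_apply,
    smul_eq_mul, mul_one] at h
  rw [← h, ← neg_one_smul ℤ (fwdDiffₗ ℕ G 1), smul_pow, LinearMap.smul_apply,
    Pi.smul_apply, coe_fwdDiffₗ_pow]

theorem fwdDiff_iter_choose_apply (n N y : ℕ) :
    Δ_[1] ^[n] (fun x => (x.choose N : ℤ)) y = if n ≤ N then (y.choose (N - n) : ℤ) else 0 := by
  split_ifs with h
  · obtain ⟨k, rfl⟩ := Nat.exists_eq_add_of_le h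
    rw [Nat.add_sub_cancel_left, fwdDiff_iter_choose]
  · obtain ⟨k, rfl⟩ := Nat.exists_eq_add_of_lt (not_le.1 h)
    have hconst := fwdDiff_iter_choose 0 N
    rw [add_zero] at hconst
    rw [show N + k + 1 = k + 1 + N by ring, Function.iterate_add_apply, hconst]
    simp only [Nat.choose_zero_right, Nat.cast_one, Function.iterate_succ_apply, fwdDiff_const]
    rw [Function.iterate_fixed (fwdDiff_const (1 : ℕ) (0 : ℤ))]

theorem prod_choose_eq_zero_of_notMem_piFinset {ι R : Type*} [Fintype ι] [DecidableEq ι]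
    [CommSemiring R] {f b : ι → ℕ} (hb : b ∉ Fintype.piFinset fun i => range (f i + 1)) :
    ∏ i, ((f i).choose (b i) : R) = 0 := by
  simp only [Fintype.mem_piFinset, mem_range, not_forall, not_lt] at hb
  obtain ⟨i, hi⟩ := hb
  exact prod_eq_zero (mem_univ i) (by rw [Nat.choose_eq_zero_of_lt hi, Nat.cast_zero])

theorem finsum_neg_one_pow_mul_choose_mul_prod_choose {ι : Type*} [Fintype ι] (f : ι → ℕ)
    (B N : ℕ) :
    ∑ᶠ b : ι → ℕ, (-1 : ℤ) ^ (∑ i, b i) * ((B + ∑ i, b i).choose N : ℤ) *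
        ∏ i, ((f i).choose (b i) : ℤ) =
      (-1) ^ (∑ i, f i) * if ∑ i, f i ≤ N then (B.choose (N - ∑ i, f i) : ℤ) else 0 := by
  classical
  rw [finsum_eq_sum_of_support_subset (s := Fintype.piFinset fun i => range (f i + 1))]
  · rw [← fwdDiff_iter_choose_apply, ← smul_eq_mul, ← sum_piFinset_shift_eq_fwdDiff_iter]
    refine sum_congr rfl fun b _ => ?_
    rw [smul_eq_mul]
    ring
  · intro b hb
    by_contra h
    exact hb (by simp only [prod_choose_eq_zero_of_notMem_piFinset h, mul_zero])

theorem sum_fst_Sc (c : ℕ →₀ ℕ) : ∑ p ∈ Sc c, p.1 = ∑ r ∈ c.support, r * c r := by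
  rw [Sc, sum_biUnion]
  · refine sum_congr rfl fun r _ => ?_
    rw [sum_image fun j _ j' _ h => (Prod.ext_iff.1 h).2]
    simp [mul_comm]
  · intro r _ r' _ hne
    simp only [Function.onFun, disjoint_left, mem_image]
    rintro _ ⟨j, -, rfl⟩ ⟨j', -, h⟩
    exact hne (congr_arg Prod.fst h).symm

theorem stmt_14_general (c : ℕ →₀ ℕ) (B M : ℕ) :
    (∑ᶠ b' : {x // x ∈ Sc c} → ℕ,
        (-1 : ℤ) ^ (∑ p : {x // x ∈ Sc c}, b' p) *
          ((B + ∑ p : {x // x ∈ Sc c}, b' p).choose (M + ∑ r ∈ c.support, c r) : ℤ) *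
          ∏ p : {x // x ∈ Sc c}, ((p : ℕ × ℕ).1.choose (b' p) : ℤ)) =
      (-1 : ℤ) ^ (∑ r ∈ c.support, r * c r) *
        (if (∑ r ∈ c.support, r * c r) ≤ M + ∑ r ∈ c.support, c r then
          (B.choose ((M + ∑ r ∈ c.support, c r) - ∑ r ∈ c.support, r * c r) : ℤ)
        else 0) := by
  rw [finsum_neg_one_pow_mul_choose_mul_prod_choose, sum_coe_sort (Sc c) Prod.fst, sum_fst_Sc]

/-- For every finitely supported `c : {1,2,…} → ℕ` and all `B, M ∈ ℕ`:
`Σ_{b′ ∈ ℕ^{S(c)}} (−1)^{|b′|}·C(B+|b′|, M+|c|)·∏_{(r,j)∈S(c)} C(r, b′_{r,j})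
  = (−1)^{‖c‖}·C(B, M+|c|−‖c‖)`,
the sum being finite since `C(r, b′_{r,j}) = 0` for `b′_{r,j} > r`, and the
right-hand binomial coefficient being `0` if `M+|c|−‖c‖ < 0`. -/
theorem stmt_14 (c : ℕ →₀ ℕ) (hc : c 0 = 0) (B M : ℕ) :
    (∑ᶠ b' : {x // x ∈ Sc c} → ℕ,
        (-1 : ℤ) ^ (∑ p : {x // x ∈ Sc c}, b' p) *
          ((B + ∑ p : {x // x ∈ Sc c}, b' p).choose (M + ∑ r ∈ c.support, c r) : ℤ) *
          ∏ p : {x // x ∈ Sc c}, ((p : ℕ × ℕ).1.choose (b' p) : ℤ)) =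
      (-1 : ℤ) ^ (∑ r ∈ c.support, r * c r) *
        (if (∑ r ∈ c.support, r * c r) ≤ M + ∑ r ∈ c.support, c r then
          (B.choose ((M + ∑ r ∈ c.support, c r) - ∑ r ∈ c.support, r * c r) : ℤ)
        else 0) :=
  stmt_14_general c B M
end

section
/- With the convention that a! = 0 for a < 0: for all b′, b₋″, b₊″, ε₋, ε₊ ∈ ℕ one has (b₋″+ε₋−b′)! · (b₊″+ε₊+1+b′)! ≤ 5^{b₋″+b₊″+ε₋+ε₊+1} · ε₋! · ε₊! · b₋″! · b₊″!, where b₋″+ε₋−b′ is computed in ℤ (so the left-hand side is 0 when b′ > b₋″+ε₋). -/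
/-!
Since `(b₋″ + ε₋ - b′) + (b₊″ + ε₊ + 1 + b′) = N := b₋″ + b₊″ + ε₋ + ε₊ + 1`, the left-hand side
is at most `N!`. Splitting `N` into the five parts `ε₋, ε₊, b₋″, b₊″, 1`, the multinomial
coefficient `N! / (ε₋! ε₊! b₋″! b₊″! 1!)` is one term of the expansion of
`(1 + 1 + 1 + 1 + 1)^N`, hence at most `5^N`.
-/

/-- Factorial extended to `ℤ` by `a! = 0` for `a < 0`. -/
def zfact (a : ℤ) : ℕ := if a < 0 then 0 else a.toNat.factorial

open Finset

namespace Nat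

variable {ι : Type*}

theorem multinomial_le_card_pow (s : Finset ι) (f : ι → ℕ) :
    multinomial s f ≤ #s ^ ∑ i ∈ s, f i := by
  classical
  set g : ι → ℕ := fun i => if i ∈ s then f i else 0
  have hg : multinomial s g = multinomial s f :=
    multinomial_congr fun i hi => if_pos hi
  have hsum : ∑ i ∈ s, g i = ∑ i ∈ s, f i := sum_congr rfl fun i hi => if_pos hi
  have hmem : g ∈ piAntidiag s (∑ i ∈ s, f i) := by
    rw [mem_piAntidiag]
    refine ⟨hsum, fun i hi => ?_⟩
    by_contra hs
    exact hi (if_neg hs)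
  have hexp : #s ^ ∑ i ∈ s, f i = ∑ k ∈ piAntidiag s (∑ i ∈ s, f i), multinomial s k := by
    simpa using sum_pow_eq_sum_piAntidiag s (fun _ => (1 : ℕ)) (∑ i ∈ s, f i)
  rw [← hg, hexp]
  exact single_le_sum (fun _ _ => Nat.zero_le _) hmem

theorem factorial_sum_le_card_pow_mul_prod_factorial (s : Finset ι) (f : ι → ℕ) :
    (∑ i ∈ s, f i)! ≤ #s ^ (∑ i ∈ s, f i) * ∏ i ∈ s, (f i)! := by
  rw [← multinomial_spec, mul_comm]
  exact Nat.mul_le_mul_right _ (multinomial_le_card_pow s f)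

end Nat

theorem zfact_sub_mul_factorial_add_le (m n k : ℕ) :
    zfact ((m : ℤ) - k) * (n + k).factorial ≤ (m + n).factorial := by
  unfold zfact
  split_ifs with hneg
  · simp
  · obtain ⟨j, rfl⟩ : ∃ j, m = j + k := ⟨m - k, by omega⟩
    have hj : ((j + k : ℕ) - k : ℤ).toNat = j := by omega
    rw [hj, show j + k + n = j + (n + k) by ring]
    exact Nat.le_of_dvd (Nat.factorial_pos _) (Nat.factorial_mul_factorial_dvd_factorial_add _ _)

/-- For all `b′, b₋″, b₊″, ε₋, ε₊ ∈ ℕ`: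
`(b₋″+ε₋−b′)!·(b₊″+ε₊+1+b′)! ≤ 5^{b₋″+b₊″+ε₋+ε₊+1}·ε₋!·ε₊!·b₋″!·b₊″!`,
where `b₋″+ε₋−b′` is computed in `ℤ`. -/
theorem stmt_19 (b' bm bp εm εp : ℕ) :
    zfact ((bm : ℤ) + (εm : ℤ) - (b' : ℤ)) * (bp + εp + 1 + b').factorial ≤
      5 ^ (bm + bp + εm + εp + 1) * εm.factorial * εp.factorial *
        bm.factorial * bp.factorial := by
  have hsplit := zfact_sub_mul_factorial_add_le (bm + εm) (bp + εp + 1) b'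
  have hfive := Nat.factorial_sum_le_card_pow_mul_prod_factorial univ ![εm, εp, bm, bp, 1]
  simp only [Fin.sum_univ_five, Fin.prod_univ_five, card_univ, Fintype.card_fin,
    Matrix.cons_val, Nat.factorial_one, mul_one] at hfive
  push_cast at hsplit
  calc _ ≤ (bm + εm + (bp + εp + 1)).factorial := hsplit
    _ = (εm + εp + bm + bp + 1).factorial := by ring_nf
    _ ≤ _ := hfive
    _ = _ := by ring_nf
end
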